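/- arXiv:1411.0021 — 3 statements merged into one kernel-verified Lean document; each statement's English description precedes it below -/
import Mathlib

section
/- Let Λ : [1,∞) → ℂ be continuous with |Λ(k)| ≤ C₀ k^{−5/2}, let v ∈ ℝ, φ(τ) = √(τ²+1) + vτ, and Ψ(k,t) = ∫₀^k e^{itφ(τ)} dτ. Then there is a constant C, depending only on C₀, such that ∫₁^t |Ψ(k,t) Λ(k)| dk ≤ C t^{−1/2} for all t ≥ 1, uniformly in v. -/
/-!
Write `φ(τ) = √(τ² + 1) + vτ`; then `φ'(τ) = τ / √(τ² + 1) + v` is increasing and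
`φ'' = (τ² + 1)^(-3/2) ≥ 1 / (3k³)` on `[0, k]`. The second-derivative van der Corput bound gives
`|Ψ(k, t)| ≲ k^(3/2) t^(-1/2)`; against `|Λ(k)| ≲ k^(-5/2)` this costs only `log (b / a)` on an
interval `[a, b]`, so it is used just on a window of bounded ratio around the stationary point
`τ₀` of `φ`. Outside that window `|φ'(τ)| ≥ 1 / (24τ²)`, and the first-derivative bound gives
`|Ψ(k, t)| ≤ |Ψ(m, t)| + O(k² / t)` for `k ≥ m`, with `m = 1` or `m ≈ 2τ₀`; since
`∫_m^t (m^(3/2) t^(-1/2) + k² / t) k^(-5/2) dk ≲ t^(-1/2)`, both tails are of the right size.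
-/

open MeasureTheory Complex Filter

noncomputable section

open Set intervalIntegral

theorem exists_mem_Icc_forall_Ico_le {f : ℝ → ℝ} {a b : ℝ} (hab : a ≤ b)
    (hf : ContinuousOn f (Icc a b)) (hmono : MonotoneOn f (Icc a b)) (c : ℝ) :
    ∃ p ∈ Icc a b, (∀ x ∈ Ico a p, f x ≤ c) ∧ (p < b → c ≤ f p) := by
  by_cases hb : f b ≤ c
  · refine ⟨b, right_mem_Icc.2 hab, fun x hx => ?_, fun h => absurd h (lt_irrefl b)⟩
    exact (hmono ⟨hx.1, hx.2.le⟩ (right_mem_Icc.2 hab) hx.2.le).trans hb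
  by_cases ha : c ≤ f a
  · exact ⟨a, left_mem_Icc.2 hab, fun x hx => absurd hx.2 (not_lt.2 hx.1), fun _ => ha⟩
  push Not at ha hb
  obtain ⟨p, hp, hfp⟩ := intermediate_value_Icc hab hf ⟨ha.le, hb.le⟩
  refine ⟨p, hp, fun x hx => ?_, fun _ => hfp.ge⟩
  exact hfp ▸ hmono ⟨hx.1, hx.2.le.trans hp.2⟩ hp hx.2.le

theorem exists_forall_Ico_le_neg_and_forall_lt_le {f : ℝ → ℝ} {a b lam μ : ℝ} (hab : a ≤ b)
    (hf : ContinuousOn f (Icc a b)) (hlam : 0 < lam) (hμ : 0 ≤ μ)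
    (hgrowth : ∀ x ∈ Icc a b, ∀ y ∈ Icc a b, x ≤ y → lam * (y - x) ≤ f y - f x) :
    ∃ p ∈ Icc a b, (∀ x ∈ Ico a p, f x ≤ -μ) ∧ ∀ x ∈ Icc a b, p + 2 * μ / lam < x → μ ≤ f x := by
  have hmono : MonotoneOn f (Icc a b) := fun x hx y hy hxy => by
    nlinarith [hgrowth x hx y hy hxy]
  obtain ⟨p, hp, hleft, hright⟩ := exists_mem_Icc_forall_Ico_le hab hf hmono (-μ)
  refine ⟨p, hp, hleft, fun x hx hpx => ?_⟩
  have hw : 0 ≤ 2 * μ / lam := by positivity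
  have hgrow := hgrowth p hp x hx (by linarith)
  have hfp := hright (by linarith [hx.2])
  have hrate : lam * (2 * μ / lam) = 2 * μ := by field_simp
  nlinarith

section VanDerCorput

variable {φ φ' φ'' : ℝ → ℝ} {a b lam : ℝ}

theorem integral_cexp_mul_I_eq (hφ : ∀ x, HasDerivAt φ (φ' x) x)
    (hφ' : ∀ x, HasDerivAt φ' (φ'' x) x) (hφ'' : Continuous φ'')
    (hne : ∀ x ∈ uIcc a b, φ' x ≠ 0) :
    ∫ x in a..b, exp (φ x * I) =
      exp (φ b * I) / (φ' b * I) - exp (φ a * I) / (φ' a * I) +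
        ∫ x in a..b, exp (φ x * I) * φ'' x / (φ' x ^ 2 * I) := by
  have hφ'c : Continuous φ' := continuous_iff_continuousAt.2 fun x => (hφ' x).continuousAt
  have hne' : ∀ x ∈ uIcc a b, (φ' x : ℂ) * I ≠ 0 := fun x hx =>
    mul_ne_zero (ofReal_ne_zero.2 (hne x hx)) I_ne_zero
  have hderiv : ∀ x ∈ uIcc a b, HasDerivAt (fun x => exp (φ x * I) / (φ' x * I))
      (exp (φ x * I) - exp (φ x * I) * φ'' x / (φ' x ^ 2 * I)) x := by
    intro x hx
    refine (((hφ x).ofReal_comp.mul_const I).cexp.div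
      ((hφ' x).ofReal_comp.mul_const I) (hne' x hx)).congr_deriv ?_
    have : (φ' x : ℂ) ≠ 0 := ofReal_ne_zero.2 (hne x hx)
    field_simp
  have hφc : Continuous φ := continuous_iff_continuousAt.2 fun x => (hφ x).continuousAt
  have hexp : Continuous fun x => exp (φ x * I) := by fun_prop
  have hD : IntervalIntegrable (fun x => exp (φ x * I) * φ'' x / (φ' x ^ 2 * I)) volume a b := by
    refine ContinuousOn.intervalIntegrable (ContinuousOn.div (by fun_prop) (by fun_prop) ?_)
    intro x hx
    exact mul_ne_zero (pow_ne_zero 2 (ofReal_ne_zero.2 (hne x hx))) I_ne_zero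
  rw [← integral_eq_sub_of_hasDerivAt hderiv ((hexp.intervalIntegrable a b).sub hD),
    integral_sub (hexp.intervalIntegrable a b) hD, sub_add_cancel]

theorem norm_integral_cexp_mul_I_mul_div_le (hφ' : ∀ x, HasDerivAt φ' (φ'' x) x)
    (hφ'' : Continuous φ'') (hab : a ≤ b) (hφ''_nonneg : ∀ x ∈ uIcc a b, 0 ≤ φ'' x)
    (hne : ∀ x ∈ uIcc a b, φ' x ≠ 0) :
    ‖∫ x in a..b, exp (φ x * I) * φ'' x / (φ' x ^ 2 * I)‖ ≤ (φ' a)⁻¹ - (φ' b)⁻¹ := by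
  have hφ'c : Continuous φ' := continuous_iff_continuousAt.2 fun x => (hφ' x).continuousAt
  have hprim : ∀ x ∈ uIcc a b, HasDerivAt (fun x => -(φ' x)⁻¹) (φ'' x / φ' x ^ 2) x :=
    fun x hx => ((hφ' x).inv (hne x hx)).neg.congr_deriv (by ring)
  have hint : IntervalIntegrable (fun x => φ'' x / φ' x ^ 2) volume a b :=
    (hφ''.continuousOn.div (by fun_prop) fun x hx => pow_ne_zero 2 (hne x hx)).intervalIntegrable
  refine (norm_integral_le_of_norm_le hab (ae_of_all _ fun x hx => le_of_eq ?_) hint).trans_eq ?_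
  · have hx : x ∈ uIcc a b := uIcc_of_le hab ▸ Ioc_subset_Icc_self hx
    rw [norm_div, norm_mul, norm_exp_ofReal_mul_I, norm_mul, norm_I, norm_pow, norm_real,
      norm_real, Real.norm_of_nonneg (hφ''_nonneg x hx), one_mul, mul_one, Real.norm_eq_abs,
      sq_abs]
  · rw [integral_eq_sub_of_hasDerivAt hprim hint]
    ring

theorem norm_integral_cexp_mul_I_le_of_le_abs_deriv (hφ : ∀ x, HasDerivAt φ (φ' x) x)
    (hφ' : ∀ x, HasDerivAt φ' (φ'' x) x) (hφ'' : Continuous φ'')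
    (hφ''_nonneg : ∀ x ∈ Icc a b, 0 ≤ φ'' x) (hab : a ≤ b) (hlam : 0 < lam)
    (hlam_le : ∀ x ∈ Ioo a b, lam ≤ |φ' x|) :
    ‖∫ x in a..b, exp (φ x * I)‖ ≤ 4 / lam := by
  rcases hab.eq_or_lt with rfl | hab
  · simp only [integral_same, norm_zero]
    positivity
  have hφ'c : Continuous φ' := continuous_iff_continuousAt.2 fun x => (hφ' x).continuousAt
  have hlam_le : ∀ x ∈ Icc a b, lam ≤ |φ' x| := by
    rw [← closure_Ioo hab.ne]
    exact (isClosed_le continuous_const (continuous_abs.comp hφ'c)).closure_subset_iff.2 hlam_le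
  have hinv : ∀ x ∈ Icc a b, |(φ' x)⁻¹| ≤ lam⁻¹ := fun x hx => by
    rw [abs_inv]
    exact inv_anti₀ hlam (hlam_le x hx)
  have hne : ∀ x ∈ Icc a b, φ' x ≠ 0 := fun x hx => abs_pos.1 (hlam.trans_le (hlam_le x hx))
  rw [← uIcc_of_le hab.le] at hne hinv hφ''_nonneg
  have hboundary : ∀ x ∈ uIcc a b, ‖exp (φ x * I) / (φ' x * I)‖ ≤ lam⁻¹ := fun x hx => by
    simpa [norm_exp_ofReal_mul_I] using hinv x hx
  have hcorr : ‖∫ x in a..b, exp (φ x * I) * φ'' x / (φ' x ^ 2 * I)‖ ≤ 2 * lam⁻¹ := by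
    refine (norm_integral_cexp_mul_I_mul_div_le hφ' hφ'' hab.le hφ''_nonneg hne).trans ?_
    linarith [hinv a left_mem_uIcc, hinv b right_mem_uIcc, le_abs_self (φ' a)⁻¹,
      neg_abs_le (φ' b)⁻¹]
  rw [integral_cexp_mul_I_eq hφ hφ' hφ'' hne]
  calc _ ≤ ‖exp (φ b * I) / (φ' b * I)‖ + ‖exp (φ a * I) / (φ' a * I)‖ +
        ‖∫ x in a..b, exp (φ x * I) * φ'' x / (φ' x ^ 2 * I)‖ :=
        (norm_add_le _ _).trans (add_le_add_left (norm_sub_le _ _) _)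
    _ ≤ lam⁻¹ + lam⁻¹ + 2 * lam⁻¹ :=
        add_le_add (add_le_add (hboundary b right_mem_uIcc) (hboundary a left_mem_uIcc)) hcorr
    _ = 4 / lam := by ring

theorem norm_integral_cexp_mul_I_le_of_le_deriv2 (hφ : ∀ x, HasDerivAt φ (φ' x) x)
    (hφ' : ∀ x, HasDerivAt φ' (φ'' x) x) (hφ'' : Continuous φ'') (hab : a ≤ b) (hlam : 0 < lam)
    (hlam_le : ∀ x ∈ Icc a b, lam ≤ φ'' x) :
    ‖∫ x in a..b, exp (φ x * I)‖ ≤ 10 / √lam := by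
  set μ := √lam
  have hμ : 0 < μ := Real.sqrt_pos.2 hlam
  have hφ'c : Continuous φ' := continuous_iff_continuousAt.2 fun x => (hφ' x).continuousAt
  have hφ''_nonneg : ∀ x ∈ Icc a b, 0 ≤ φ'' x := fun x hx => hlam.le.trans (hlam_le x hx)
  -- `φ' ≤ -μ` on `[a, p)` and `φ' ≥ μ` on `(p + 2 / μ, b]`; in between, the trivial bound
  obtain ⟨p, hp, hleft, hright⟩ := exists_forall_Ico_le_neg_and_forall_lt_le hab
    hφ'c.continuousOn hlam hμ.le ((convex_Icc a b).mul_sub_le_image_sub_of_le_deriv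
      hφ'c.continuousOn (fun x _ => (hφ' x).differentiableAt.differentiableWithinAt)
      fun x hx => (hφ' x).deriv ▸ hlam_le x (interior_subset hx))
  have hw : 2 * μ / lam = 2 / μ := by
    rw [← show μ * μ = lam from Real.mul_self_sqrt hlam.le]
    field_simp
  set q := min b (p + 2 / μ)
  have hpq : p ≤ q := le_min hp.2 (le_add_of_nonneg_right (by positivity))
  have hqb : q ≤ b := min_le_left _ _
  have h₁ : ‖∫ x in a..p, exp (φ x * I)‖ ≤ 4 / μ :=
    norm_integral_cexp_mul_I_le_of_le_abs_deriv hφ hφ' hφ''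
      (fun x hx => hφ''_nonneg x ⟨hx.1, hx.2.trans hp.2⟩) hp.1 hμ
      fun x hx => le_abs.2 (Or.inr (by linarith [hleft x ⟨hx.1.le, hx.2⟩]))
  have h₂ : ‖∫ x in p..q, exp (φ x * I)‖ ≤ 2 / μ := by
    refine (norm_integral_le_of_norm_le_const (C := 1)
      fun x _ => (norm_exp_ofReal_mul_I _).le).trans ?_
    rw [one_mul, abs_of_nonneg (sub_nonneg.2 hpq)]
    linarith [min_le_right b (p + 2 / μ)]
  have h₃ : ‖∫ x in q..b, exp (φ x * I)‖ ≤ 4 / μ := by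
    refine norm_integral_cexp_mul_I_le_of_le_abs_deriv hφ hφ' hφ''
      (fun x hx => hφ''_nonneg x ⟨hp.1.trans (hpq.trans hx.1), hx.2⟩) hqb hμ fun x hx => ?_
    have hpx : p + 2 / μ < x := (min_lt_iff.1 hx.1).resolve_left (not_lt.2 hx.2.le)
    refine le_abs.2 (Or.inl (hright x ⟨?_, hx.2.le⟩ (hw ▸ hpx)))
    linarith [hp.1, div_pos two_pos hμ]
  have hint : ∀ c d, IntervalIntegrable (fun x => exp (φ x * I)) volume c d := fun c d =>
    ContinuousOn.intervalIntegrable (by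
      have hφc : Continuous φ := continuous_iff_continuousAt.2 fun x => (hφ x).continuousAt
      fun_prop)
  rw [← integral_add_adjacent_intervals (hint a p) (hint p b),
    ← integral_add_adjacent_intervals (hint p q) (hint q b)]
  calc _ ≤ ‖∫ x in a..p, exp (φ x * I)‖ + (‖∫ x in p..q, exp (φ x * I)‖ +
        ‖∫ x in q..b, exp (φ x * I)‖) :=
        (norm_add_le _ _).trans (add_le_add_right (norm_add_le _ _) _)
    _ ≤ 4 / μ + (2 / μ + 4 / μ) := add_le_add h₁ (add_le_add h₂ h₃)
    _ = 10 / μ := by ring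

end VanDerCorput

section WeightedIntegrals

variable {Ψ Λ : ℝ → ℂ} {C₀ A : ℝ}

theorem integral_norm_mul_le_of_norm_le_add_mul_sq {B m y : ℝ} (hC₀ : 0 ≤ C₀) (hA : 0 ≤ A)
    (hB : 0 ≤ B) (hm : 0 < m) (hmy : m ≤ y)
    (hΨc : ContinuousOn Ψ (Icc m y)) (hΛc : ContinuousOn Λ (Icc m y))
    (hΨ : ∀ k ∈ Ioo m y, ‖Ψ k‖ ≤ A + B * k ^ 2)
    (hΛ : ∀ k ∈ Ioo m y, ‖Λ k‖ ≤ C₀ * k ^ (-(5 / 2 : ℝ))) :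
    ∫ k in m..y, ‖Ψ k * Λ k‖ ≤ C₀ * (2 / 3 * A * m ^ (-(3 / 2 : ℝ)) + 2 * B * √y) := by
  have h0 : (0 : ℝ) ∉ uIcc m y := fun h => by rw [uIcc_of_le hmy] at h; linarith [h.1]
  have hint : ∀ r : ℝ, IntervalIntegrable (fun k => k ^ r) volume m y :=
    fun r => intervalIntegrable_rpow (Or.inr h0)
  refine (integral_mono_on_of_le_Ioo (f := fun k => ‖Ψ k * Λ k‖) hmy
    ((hΨc.mul hΛc).norm.intervalIntegrable_of_Icc hmy)
    (((hint (-(5 / 2))).const_mul (C₀ * A)).add ((hint (-(1 / 2))).const_mul (C₀ * B)))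
    fun k hk => ?_).trans ?_
  · have hk0 : 0 < k := hm.trans hk.1
    rw [norm_mul]
    calc ‖Ψ k‖ * ‖Λ k‖ ≤ (A + B * k ^ 2) * (C₀ * k ^ (-(5 / 2 : ℝ))) :=
          mul_le_mul (hΨ k hk) (hΛ k hk) (norm_nonneg _) (by positivity)
      _ = C₀ * A * k ^ (-(5 / 2 : ℝ)) + C₀ * B * k ^ (-(1 / 2 : ℝ)) := by
          rw [show (-(1 / 2 : ℝ)) = 2 + -(5 / 2) by norm_num, Real.rpow_add hk0, Real.rpow_two]
          ring
  · rw [integral_add ((hint _).const_mul _) ((hint _).const_mul _),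
      intervalIntegral.integral_const_mul, intervalIntegral.integral_const_mul,
      integral_rpow (Or.inr ⟨by norm_num, h0⟩), integral_rpow (Or.inl (by norm_num)),
      show -(5 / 2 : ℝ) + 1 = -(3 / 2) by norm_num, show -(1 / 2 : ℝ) + 1 = 1 / 2 by norm_num,
      ← Real.sqrt_eq_rpow, ← Real.sqrt_eq_rpow]
    nlinarith [mul_nonneg (mul_nonneg hC₀ hA) (Real.rpow_nonneg (hm.le.trans hmy) (-(3 / 2))),
      mul_nonneg (mul_nonneg hC₀ hB) (Real.sqrt_nonneg m)]

theorem integral_norm_mul_le_of_norm_le_mul_rpow {c x y : ℝ} (hC₀ : 0 ≤ C₀) (hA : 0 ≤ A)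
    (hx : 0 < x) (hxy : x ≤ y) (hyx : y ≤ c * x)
    (hΨc : ContinuousOn Ψ (Icc x y)) (hΛc : ContinuousOn Λ (Icc x y))
    (hΨ : ∀ k ∈ Ioo x y, ‖Ψ k‖ ≤ A * k ^ (3 / 2 : ℝ))
    (hΛ : ∀ k ∈ Ioo x y, ‖Λ k‖ ≤ C₀ * k ^ (-(5 / 2 : ℝ))) :
    ∫ k in x..y, ‖Ψ k * Λ k‖ ≤ C₀ * A * Real.log c := by
  have hinv : IntervalIntegrable (fun k : ℝ => k⁻¹) volume x y :=
    (continuousOn_inv₀.mono fun k hk => by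
      rw [uIcc_of_le hxy] at hk; exact (hx.trans_le hk.1).ne').intervalIntegrable
  refine (integral_mono_on_of_le_Ioo (f := fun k => ‖Ψ k * Λ k‖) hxy
    ((hΨc.mul hΛc).norm.intervalIntegrable_of_Icc hxy)
    (hinv.const_mul (C₀ * A)) fun k hk => ?_).trans ?_
  · have hk0 : 0 < k := hx.trans hk.1
    rw [norm_mul]
    calc ‖Ψ k‖ * ‖Λ k‖ ≤ (A * k ^ (3 / 2 : ℝ)) * (C₀ * k ^ (-(5 / 2 : ℝ))) :=
          mul_le_mul (hΨ k hk) (hΛ k hk) (norm_nonneg _) (by positivity)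
      _ = C₀ * A * k⁻¹ := by
          rw [mul_mul_mul_comm, ← Real.rpow_add hk0, show (3 / 2 : ℝ) + -(5 / 2) = -1 by norm_num,
            Real.rpow_neg_one]
          ring
  · rw [intervalIntegral.integral_const_mul, integral_inv_of_pos hx (hx.trans_le hxy)]
    exact mul_le_mul_of_nonneg_left (Real.log_le_log (div_pos (hx.trans_le hxy) hx)
      ((div_le_iff₀ hx).2 hyx)) (mul_nonneg hC₀ hA)

end WeightedIntegrals

namespace MSW

def phase (v τ : ℝ) : ℝ := √(τ ^ 2 + 1) + v * τ

def phaseDeriv (v τ : ℝ) : ℝ := τ / √(τ ^ 2 + 1) + v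

def phaseDeriv2 (τ : ℝ) : ℝ := (√(τ ^ 2 + 1) ^ 3)⁻¹

theorem sqrt_sq_add_one_pos (τ : ℝ) : 0 < √(τ ^ 2 + 1) := Real.sqrt_pos.2 (by positivity)

theorem hasDerivAt_phase (v τ : ℝ) : HasDerivAt (phase v) (phaseDeriv v τ) τ := by
  have hs := sqrt_sq_add_one_pos τ
  refine ((((hasDerivAt_pow 2 τ).add_const 1).sqrt (by positivity)).add
    ((hasDerivAt_id τ).const_mul v)).congr_deriv ?_
  simp only [phaseDeriv]
  field_simp
  ring

theorem continuous_phase (v : ℝ) : Continuous (phase v) :=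
  continuous_iff_continuousAt.2 fun τ => (hasDerivAt_phase v τ).continuousAt

theorem hasDerivAt_phaseDeriv (v τ : ℝ) : HasDerivAt (phaseDeriv v) (phaseDeriv2 τ) τ := by
  have hs := sqrt_sq_add_one_pos τ
  have hsq : √(τ ^ 2 + 1) ^ 2 = τ ^ 2 + 1 := Real.sq_sqrt (by positivity)
  refine (((hasDerivAt_id τ).div (((hasDerivAt_pow 2 τ).add_const 1).sqrt (by positivity))
    hs.ne').add_const v).congr_deriv ?_
  simp only [phaseDeriv2, id]
  field_simp
  rw [hsq]
  push_cast
  ring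

theorem phaseDeriv2_pos (τ : ℝ) : 0 < phaseDeriv2 τ := by
  have := sqrt_sq_add_one_pos τ
  unfold phaseDeriv2
  positivity

theorem continuous_phaseDeriv2 : Continuous phaseDeriv2 :=
  (by fun_prop : Continuous fun τ : ℝ => √(τ ^ 2 + 1) ^ 3).inv₀
    fun τ => (pow_pos (sqrt_sq_add_one_pos τ) 3).ne'

theorem continuous_phaseDeriv (v : ℝ) : Continuous (phaseDeriv v) :=
  continuous_iff_continuousAt.2 fun τ => (hasDerivAt_phaseDeriv v τ).continuousAt

theorem monotone_phaseDeriv (v : ℝ) : Monotone (phaseDeriv v) :=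
  (strictMono_of_hasDerivAt_pos (hasDerivAt_phaseDeriv v) phaseDeriv2_pos).monotone

theorem inv_le_phaseDeriv2 {K τ : ℝ} (hK : 1 ≤ K) (hτ : |τ| ≤ K) :
    (3 * K ^ 3)⁻¹ ≤ phaseDeriv2 τ := by
  have hs := sqrt_sq_add_one_pos τ
  have hsq : √(τ ^ 2 + 1) ^ 2 = τ ^ 2 + 1 := Real.sq_sqrt (by positivity)
  have hτK : τ ^ 2 ≤ K ^ 2 := sq_le_sq' (abs_le.1 hτ).1 (abs_le.1 hτ).2
  -- `√(τ ^ 2 + 1) ≤ √2 K ≤ 3 K / 2`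
  have hsK : √(τ ^ 2 + 1) ≤ 3 / 2 * K := by nlinarith [sq_nonneg (√(τ ^ 2 + 1) - 3 / 2 * K)]
  refine inv_anti₀ (by positivity) ?_
  calc √(τ ^ 2 + 1) ^ 3 = √(τ ^ 2 + 1) * √(τ ^ 2 + 1) ^ 2 := by ring
    _ = √(τ ^ 2 + 1) * (τ ^ 2 + 1) := by rw [hsq]
    _ ≤ 3 / 2 * K * (2 * K ^ 2) := by gcongr; nlinarith
    _ = 3 * K ^ 3 := by ring

theorem sub_div_le_phaseDeriv_sub {v x y : ℝ} (hx : 0 ≤ x) (hxy : x ≤ y) (hy : 1 ≤ y) :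
    (y - x) / (3 * y ^ 3) ≤ phaseDeriv v y - phaseDeriv v x := by
  have := (convex_Icc x y).mul_sub_le_image_sub_of_le_deriv
    (continuous_phaseDeriv v).continuousOn
    (fun τ _ => (hasDerivAt_phaseDeriv v τ).differentiableAt.differentiableWithinAt)
    (C := (3 * y ^ 3)⁻¹) (fun τ hτ => by
      rw [interior_Icc] at hτ
      rw [(hasDerivAt_phaseDeriv v τ).deriv]
      exact inv_le_phaseDeriv2 hy (abs_le.2 ⟨by linarith [hτ.1], hτ.2.le⟩))
    x (left_mem_Icc.2 hxy) y (right_mem_Icc.2 hxy) hxy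
  rwa [div_eq_inv_mul]

theorem inv_le_abs_phaseDeriv_of_phaseDeriv_two_mul_nonpos {v τ : ℝ} (hτ : 1 ≤ τ)
    (h : phaseDeriv v (2 * τ) ≤ 0) : (24 * τ ^ 2)⁻¹ ≤ |phaseDeriv v τ| := by
  have hgap := sub_div_le_phaseDeriv_sub (v := v) (by linarith) (by linarith : τ ≤ 2 * τ)
    (by linarith)
  have hτ0 : 0 < τ := by linarith
  have : (2 * τ - τ) / (3 * (2 * τ) ^ 3) = (24 * τ ^ 2)⁻¹ := by field_simp; ring
  rw [this] at hgap
  exact le_abs.2 (Or.inr (by linarith))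

theorem inv_le_abs_phaseDeriv_of_phaseDeriv_nonneg {v τ₀ τ : ℝ} (hτ₀ : 0 ≤ τ₀)
    (h : 0 ≤ phaseDeriv v τ₀) (hτ₀τ : 2 * τ₀ ≤ τ) (hτ : 1 ≤ τ) :
    (24 * τ ^ 2)⁻¹ ≤ |phaseDeriv v τ| := by
  have hgap := sub_div_le_phaseDeriv_sub (v := v) hτ₀ (by linarith) hτ
  have hτ0 : 0 < τ := by linarith
  have : (24 * τ ^ 2)⁻¹ ≤ (τ - τ₀) / (3 * τ ^ 3) := by
    rw [le_div_iff₀ (by positivity)]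
    field_simp
    nlinarith
  exact le_abs.2 (Or.inl (by linarith))

/-- `Ψ(k, t)` in the paper. -/
def phaseIntegral (v t k : ℝ) : ℂ := ∫ τ in (0 : ℝ)..k, exp ((t * phase v τ : ℝ) * I)

theorem continuous_phaseIntegral (v t : ℝ) : Continuous (phaseIntegral v t) :=
  continuous_primitive (fun a b => Continuous.intervalIntegrable
    (by have := continuous_phase v; fun_prop) a b) 0

theorem norm_phaseIntegral_le {v t k : ℝ} (ht : 0 < t) (hk : 1 ≤ k) :
    ‖phaseIntegral v t k‖ ≤ 10 * √3 * k ^ (3 / 2 : ℝ) / √t := by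
  have hk0 : 0 < k := by linarith
  refine (norm_integral_cexp_mul_I_le_of_le_deriv2 (φ := fun τ => t * phase v τ)
    (fun τ => (hasDerivAt_phase v τ).const_mul t)
    (fun τ => (hasDerivAt_phaseDeriv v τ).const_mul t)
    (continuous_const.mul continuous_phaseDeriv2) hk0.le (lam := t * (3 * k ^ 3)⁻¹)
    (by positivity) fun τ hτ => mul_le_mul_of_nonneg_left
      (inv_le_phaseDeriv2 hk (abs_le.2 ⟨by linarith [hτ.1], hτ.2⟩)) ht.le).trans_eq ?_
  rw [Real.sqrt_mul ht.le, Real.sqrt_inv, Real.sqrt_mul (by norm_num), Real.sqrt_eq_rpow (k ^ 3),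
    ← Real.rpow_natCast, ← Real.rpow_mul hk0.le, show ((3 : ℕ) : ℝ) * (1 / 2) = 3 / 2 by norm_num]
  field_simp

theorem norm_phaseIntegral_le_of_inv_le_abs_phaseDeriv {v t m k : ℝ} (ht : 0 < t) (hm : 1 ≤ m)
    (hmk : m ≤ k) (h : ∀ τ ∈ Ioo m k, (24 * τ ^ 2)⁻¹ ≤ |phaseDeriv v τ|) :
    ‖phaseIntegral v t k‖ ≤ 10 * √3 * m ^ (3 / 2 : ℝ) / √t + 96 * k ^ 2 / t := by
  have hk0 : 0 < k := by linarith
  have htail := norm_integral_cexp_mul_I_le_of_le_abs_deriv (φ := fun τ => t * phase v τ)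
    (fun τ => (hasDerivAt_phase v τ).const_mul t)
    (fun τ => (hasDerivAt_phaseDeriv v τ).const_mul t)
    (continuous_const.mul continuous_phaseDeriv2) (fun τ _ => (mul_pos ht (phaseDeriv2_pos τ)).le)
    hmk (lam := t * (24 * k ^ 2)⁻¹) (by positivity) fun τ hτ => by
      have hτ0 : 0 < τ := by linarith [hτ.1]
      rw [abs_mul, abs_of_pos ht]
      refine mul_le_mul_of_nonneg_left ((inv_anti₀ (by positivity) ?_).trans (h τ hτ)) ht.le
      nlinarith [hτ.2]
  have hint : ∀ a b, IntervalIntegrable (fun τ => exp ((t * phase v τ : ℝ) * I)) volume a b :=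
    fun a b => Continuous.intervalIntegrable (by have := continuous_phase v; fun_prop) a b
  rw [phaseIntegral, ← integral_add_adjacent_intervals (hint 0 m) (hint m k)]
  calc _ ≤ ‖phaseIntegral v t m‖ + ‖∫ τ in m..k, exp ((t * phase v τ : ℝ) * I)‖ := norm_add_le _ _
    _ ≤ 10 * √3 * m ^ (3 / 2 : ℝ) / √t + 4 / (t * (24 * k ^ 2)⁻¹) :=
        add_le_add (norm_phaseIntegral_le ht hm) htail
    _ = 10 * √3 * m ^ (3 / 2 : ℝ) / √t + 96 * k ^ 2 / t := by field_simp; ring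

theorem integral_norm_phaseIntegral_mul_le_of_inv_le_abs_phaseDeriv {Λ : ℝ → ℂ} {C₀ v t m y : ℝ}
    (hC₀ : 0 ≤ C₀) (hΛc : ContinuousOn Λ (Ici 1))
    (hΛ : ∀ k : ℝ, 1 ≤ k → ‖Λ k‖ ≤ C₀ * k ^ (-(5 / 2 : ℝ))) (hm : 1 ≤ m) (hmy : m ≤ y)
    (hyt : y ≤ t) (h : ∀ τ ∈ Ioo m y, (24 * τ ^ 2)⁻¹ ≤ |phaseDeriv v τ|) :
    ∫ k in m..y, ‖phaseIntegral v t k * Λ k‖ ≤ C₀ * (20 / 3 * √3 + 192) / √t := by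
  have ht : 0 < t := by linarith
  refine (integral_norm_mul_le_of_norm_le_add_mul_sq (A := 10 * √3 * m ^ (3 / 2 : ℝ) / √t)
    (B := 96 / t) hC₀ (by positivity) (by positivity) (by linarith) hmy
    (continuous_phaseIntegral v t).continuousOn (hΛc.mono fun k hk => hm.trans hk.1)
    (fun k hk => (norm_phaseIntegral_le_of_inv_le_abs_phaseDeriv ht hm hk.1.le
      fun τ hτ => h τ ⟨hτ.1, hτ.2.trans hk.2⟩).trans_eq (by ring))
    fun k hk => hΛ k (hm.trans hk.1.le)).trans ?_
  have hm32 : m ^ (3 / 2 : ℝ) * m ^ (-(3 / 2 : ℝ)) = 1 := by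
    rw [← Real.rpow_add (by linarith)]; norm_num
  have hy : √y / t ≤ 1 / √t := by
    rw [div_le_div_iff₀ ht (Real.sqrt_pos.2 ht), one_mul]
    calc √y * √t ≤ √t * √t := by gcongr
      _ = t := Real.mul_self_sqrt ht.le
  calc C₀ * (2 / 3 * (10 * √3 * m ^ (3 / 2 : ℝ) / √t) * m ^ (-(3 / 2 : ℝ)) + 2 * (96 / t) * √y)
      = C₀ * (20 / 3 * √3 / √t * (m ^ (3 / 2 : ℝ) * m ^ (-(3 / 2 : ℝ))) + 192 * (√y / t)) := by
        ring
    _ ≤ C₀ * (20 / 3 * √3 / √t * 1 + 192 * (1 / √t)) := by rw [hm32]; gcongr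
    _ = C₀ * (20 / 3 * √3 + 192) / √t := by ring

theorem integral_norm_phaseIntegral_mul_le_log {Λ : ℝ → ℂ} {C₀ v t c x y : ℝ}
    (hC₀ : 0 ≤ C₀) (hΛc : ContinuousOn Λ (Ici 1))
    (hΛ : ∀ k : ℝ, 1 ≤ k → ‖Λ k‖ ≤ C₀ * k ^ (-(5 / 2 : ℝ))) (ht : 0 < t) (hx : 1 ≤ x)
    (hxy : x ≤ y) (hyx : y ≤ c * x) :
    ∫ k in x..y, ‖phaseIntegral v t k * Λ k‖ ≤ C₀ * (10 * √3 / √t) * Real.log c :=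
  integral_norm_mul_le_of_norm_le_mul_rpow hC₀ (by positivity) (by linarith) hxy hyx
    (continuous_phaseIntegral v t).continuousOn (hΛc.mono fun k hk => hx.trans hk.1)
    (fun k hk => (norm_phaseIntegral_le ht (hx.trans hk.1.le)).trans_eq (by ring))
    fun k hk => hΛ k (hx.trans hk.1.le)

theorem integral_norm_phaseIntegral_mul_le {Λ : ℝ → ℂ} {C₀ v t : ℝ} (hC₀ : 0 ≤ C₀)
    (hΛc : ContinuousOn Λ (Ici 1)) (hΛ : ∀ k : ℝ, 1 ≤ k → ‖Λ k‖ ≤ C₀ * k ^ (-(5 / 2 : ℝ)))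
    (ht : 1 ≤ t) :
    ∫ k in (1 : ℝ)..t, ‖phaseIntegral v t k * Λ k‖ ≤
      C₀ * (2 * (20 / 3 * √3 + 192) + 10 * √3 * Real.log 6) / √t := by
  -- `τ₀` is the stationary point of the phase, or an endpoint of `[0, 3t]` if there is none inside;
  -- `[1, a]` lies left of `τ₀ / 3` and `[b, t]` right of `2 τ₀`
  obtain ⟨τ₀, hτ₀, hneg, hpos⟩ := exists_mem_Icc_forall_Ico_le (by linarith : (0 : ℝ) ≤ 3 * t)
    (continuous_phaseDeriv v).continuousOn ((monotone_phaseDeriv v).monotoneOn _) 0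
  set X := max 1 (τ₀ / 3)
  have hX : 1 ≤ X := le_max_left _ _
  set a := min t X
  set b := min t (6 * X)
  have h1a : 1 ≤ a := le_min ht hX
  have hab : a ≤ b := min_le_min le_rfl (by linarith)
  have h1b := h1a.trans hab
  have hb6a : b ≤ 6 * a :=
    (min_le_min (by linarith) le_rfl).trans_eq (mul_min_of_nonneg _ _ (by norm_num)).symm
  have hint : ∀ x y, 1 ≤ x → 1 ≤ y →
      IntervalIntegrable (fun k => ‖phaseIntegral v t k * Λ k‖) volume x y := fun x y hx hy =>
    (((continuous_phaseIntegral v t).continuousOn.mul hΛc).norm.mono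
      fun k hk => (le_min hx hy).trans hk.1).intervalIntegrable
  have hA := integral_norm_phaseIntegral_mul_le_of_inv_le_abs_phaseDeriv hC₀ hΛc hΛ le_rfl h1a
    (min_le_left _ _) fun τ hτ => by
      have : τ < τ₀ / 3 :=
        (lt_max_iff.1 (hτ.2.trans_le (min_le_right _ _))).resolve_left (not_lt.2 hτ.1.le)
      exact inv_le_abs_phaseDeriv_of_phaseDeriv_two_mul_nonpos hτ.1.le
        (hneg _ ⟨by linarith [hτ.1], by linarith [hτ.1]⟩)
  have hB := integral_norm_phaseIntegral_mul_le_log (v := v) hC₀ hΛc hΛ (by linarith : 0 < t)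
    h1a hab hb6a
  have hC := integral_norm_phaseIntegral_mul_le_of_inv_le_abs_phaseDeriv hC₀ hΛc hΛ h1b
    (min_le_left _ _) le_rfl fun τ hτ => by
      have : 6 * X < τ := (min_lt_iff.1 hτ.1).resolve_left (not_lt.2 hτ.2.le)
      have := le_max_right 1 (τ₀ / 3)
      exact inv_le_abs_phaseDeriv_of_phaseDeriv_nonneg hτ₀.1 (hpos (by linarith [hτ.2]))
        (by linarith) (by linarith)
  rw [← integral_add_adjacent_intervals (hint 1 b le_rfl h1b) (hint b t h1b ht),
    ← integral_add_adjacent_intervals (hint 1 a le_rfl h1a) (hint a b h1a h1b)]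
  calc _ ≤ _ := add_le_add (add_le_add hA hB) hC
    _ = _ := by ring

end MSW

open MSW in
/-- decay estimate of Lemma A.1: let `Λ` be continuous on `[1,∞)` with
`|Λ(k)| ≤ C₀ k^{−5/2}`, `φ(τ) = √(τ²+1) + vτ` and `Ψ(k,t) = ∫₀^k e^{itφ(τ)} dτ`.
Then `∫₁^t |Ψ(k,t)Λ(k)| dk ≤ C t^{−1/2}` for `t ≥ 1`, with `C` depending only on `C₀`
(in particular uniformly in `v`). -/
theorem decay_estimate_MSW (C₀ : ℝ) (hC₀ : 0 ≤ C₀) :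
    ∃ C : ℝ, ∀ (Λ : ℝ → ℂ) (v t : ℝ),
      ContinuousOn Λ (Set.Ici 1) →
      (∀ k : ℝ, 1 ≤ k → ‖Λ k‖ ≤ C₀ * k ^ (-(5 / 2 : ℝ))) →
      1 ≤ t →
      (∫ k in (1:ℝ)..t,
          ‖(∫ τ in (0:ℝ)..k,
              Complex.exp (Complex.I * t * (Real.sqrt (τ ^ 2 + 1) + v * τ))) * Λ k‖) ≤
        C * t ^ (-(1 / 2 : ℝ)) := by
  refine ⟨C₀ * (2 * (20 / 3 * √3 + 192) + 10 * √3 * Real.log 6), fun Λ v t hΛc hΛ ht => ?_⟩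
  have hΨ : ∀ k, ∫ τ in (0:ℝ)..k, exp (I * t * (√(τ ^ 2 + 1) + v * τ)) = phaseIntegral v t k :=
    fun k => by
      simp only [phaseIntegral, phase]
      congr 1 with τ
      push_cast
      ring_nf
  simp only [hΨ]
  rw [Real.rpow_neg (by linarith), ← Real.sqrt_eq_rpow, ← div_eq_mul_inv]
  exact integral_norm_phaseIntegral_mul_le hC₀ hΛc hΛ ht
end
end

section
/- Let η : [1,∞) → ℂ be smooth with |η(k)| ≤ 1 and |η'(k)| ≤ k^{−1}, let m > 0, α > 3/2, and g ∈ 𝒜₁. Then there is a constant C = C(m, α) such that for all t ≥ 1, sup_{p ∈ ℝ} |∫₁^∞ η(k) k^{−α} e^{±it√(k²+m²) + ikp} g(k) dk| ≤ C ‖g‖_{𝒜₁} t^{−1/2}. -/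
/-!
Split `[1, ∞)` into dyadic blocks `[a, 2a]`. On such a block the phase `±t √(k² + m²) + k p` has
second derivative of absolute value at least `t m² / ((4 + m²) a²)^{3/2}`, so van der Corput's
second-derivative test bounds the block by `a^{-α} · a^{3/2} t^{-1/2}` up to a constant. The test
integrates by parts where `|ψ'| ≥ μ`, with `μ²` the curvature bound, and uses the trivial bound on
the remaining interval of length at most `2 / μ` around the stationary point. As `α > 3/2`, the
blocks sum geometrically. Finally, by Fubini the Fourier-integral part of `g ∈ 𝒜₁` only shifts
`p`, and the estimate is uniform in `p`.
-/

open MeasureTheory Complex Filter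

noncomputable section

/-- `g ∈ 𝒜₁`: `g k = c + ∫ e^{ikp} gh(p) dp` with `c ∈ ℂ`, `gh ∈ L¹`;
the `𝒜₁`-norm is `|c| + ∫‖gh‖`. -/
def WienerRep1 (g : ℝ → ℂ) (c : ℂ) (gh : ℝ → ℂ) : Prop :=
  Integrable gh ∧ ∀ k : ℝ, g k = c + ∫ p : ℝ, Complex.exp (Complex.I * k * p) * gh p

open Set ComplexConjugate

theorem mul_sub_le_sub_of_le_hasDerivAt {f f' : ℝ → ℝ} {a b C : ℝ}
    (hf : ∀ x ∈ Icc a b, HasDerivAt f (f' x) x) (hC : ∀ x ∈ Icc a b, C ≤ f' x) {x y : ℝ}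
    (hx : x ∈ Icc a b) (hy : y ∈ Icc a b) (hxy : x ≤ y) : C * (y - x) ≤ f y - f x :=
  (convex_Icc a b).mul_sub_le_image_sub_of_le_deriv
    (fun z hz ↦ (hf z hz).continuousAt.continuousWithinAt)
    (fun z hz ↦ (hf z (interior_subset hz)).differentiableAt.differentiableWithinAt)
    (fun z hz ↦ (hf z (interior_subset hz)).deriv ▸ hC z (interior_subset hz)) x hx y hy hxy

section VanDerCorput

variable {a b μ M : ℝ} {A A' : ℝ → ℂ} {ψ ψ' ψ'' : ℝ → ℝ}

theorem hasDerivAt_neg_inv_of_hasDerivAt {k : ℝ} (hψ' : HasDerivAt ψ' (ψ'' k) k)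
    (hne : ψ' k ≠ 0) : HasDerivAt (fun k ↦ -(ψ' k)⁻¹) (ψ'' k / ψ' k ^ 2) k :=
  (hψ'.inv hne).neg.congr_deriv (by ring)

theorem intervalIntegrable_deriv_div_sq (hab : a ≤ b)
    (hψ' : ∀ k ∈ Icc a b, HasDerivAt ψ' (ψ'' k) k) (hne : ∀ k ∈ Icc a b, ψ' k ≠ 0)
    (hψ''_nonneg : ∀ k ∈ Icc a b, 0 ≤ ψ'' k) :
    IntervalIntegrable (fun k ↦ ψ'' k / ψ' k ^ 2) volume a b := by
  have hIoo : Ioo (min a b) (max a b) = Ioo a b := by rw [min_eq_left hab, max_eq_right hab]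
  refine intervalIntegral.intervalIntegrable_deriv_of_nonneg (g := fun k ↦ -(ψ' k)⁻¹) ?_
    (hIoo ▸ fun k hk ↦ hasDerivAt_neg_inv_of_hasDerivAt (hψ' k (Ioo_subset_Icc_self hk))
      (hne k (Ioo_subset_Icc_self hk)))
    (hIoo ▸ fun k hk ↦ div_nonneg (hψ''_nonneg k (Ioo_subset_Icc_self hk)) (sq_nonneg _))
  rw [uIcc_of_le hab]
  exact fun k hk ↦ (hasDerivAt_neg_inv_of_hasDerivAt (hψ' k hk) (hne k hk)).continuousAt
    |>.continuousWithinAt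

theorem integral_deriv_div_sq (hab : a ≤ b)
    (hψ' : ∀ k ∈ Icc a b, HasDerivAt ψ' (ψ'' k) k) (hne : ∀ k ∈ Icc a b, ψ' k ≠ 0)
    (hψ''_nonneg : ∀ k ∈ Icc a b, 0 ≤ ψ'' k) :
    ∫ k in a..b, ψ'' k / ψ' k ^ 2 = (ψ' a)⁻¹ - (ψ' b)⁻¹ := by
  rw [intervalIntegral.integral_eq_sub_of_hasDerivAt_of_le hab
    (fun k hk ↦ (hasDerivAt_neg_inv_of_hasDerivAt (hψ' k hk) (hne k hk)).continuousAt
      |>.continuousWithinAt)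
    (fun k hk ↦ hasDerivAt_neg_inv_of_hasDerivAt (hψ' k (Ioo_subset_Icc_self hk))
      (hne k (Ioo_subset_Icc_self hk)))
    (intervalIntegrable_deriv_div_sq hab hψ' hne hψ''_nonneg)]
  ring

/-- Integration by parts, writing `exp (I ψ)` as its derivative divided by `I ψ'`. -/
theorem integral_mul_exp_I_eq_by_parts (hab : a ≤ b)
    (hψ : ∀ k ∈ Icc a b, HasDerivAt ψ (ψ' k) k) (hψ' : ∀ k ∈ Icc a b, HasDerivAt ψ' (ψ'' k) k)
    (hne : ∀ k ∈ Icc a b, ψ' k ≠ 0) (hψ''_nonneg : ∀ k ∈ Icc a b, 0 ≤ ψ'' k)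
    (hA : ContinuousOn A (Icc a b)) (hA' : ∀ k ∈ Ioo a b, HasDerivAt A (A' k) k)
    (hA'_int : IntervalIntegrable A' volume a b) :
    ∫ k in a..b, A k * exp (I * ψ k) =
      A b * (I * ψ' b)⁻¹ * exp (I * ψ b) - A a * (I * ψ' a)⁻¹ * exp (I * ψ a) -
        ∫ k in a..b, (A' k * (I * ψ' k)⁻¹ + A k * (I * ((ψ'' k / ψ' k ^ 2 : ℝ) : ℂ))) *
          exp (I * ψ k) := by
  have hIcc : uIcc a b = Icc a b := uIcc_of_le hab
  have hIoo : Ioo (min a b) (max a b) = Ioo a b := by rw [min_eq_left hab, max_eq_right hab]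
  have hneC : ∀ k ∈ Icc a b, I * (ψ' k : ℂ) ≠ 0 :=
    fun k hk ↦ mul_ne_zero I_ne_zero (ofReal_ne_zero.2 (hne k hk))
  have hE : ∀ k ∈ Icc a b, HasDerivAt (fun k ↦ exp (I * ψ k)) (exp (I * ψ k) * (I * ψ' k)) k :=
    fun k hk ↦ (((hψ k hk).ofReal_comp).const_mul I).cexp
  have hJ : ∀ k ∈ Icc a b,
      HasDerivAt (fun k ↦ (I * ψ' k)⁻¹) (I * ((ψ'' k / ψ' k ^ 2 : ℝ) : ℂ)) k := fun k hk ↦ by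
    refine ((((hψ' k hk).ofReal_comp).const_mul I).inv (hneC k hk)).congr_deriv ?_
    have : (ψ' k : ℂ) ≠ 0 := ofReal_ne_zero.2 (hne k hk)
    push_cast
    rw [mul_pow, I_sq]
    field_simp
  have hψ'_cont : ContinuousOn (fun k ↦ I * (ψ' k : ℂ)) (Icc a b) :=
    fun k hk ↦ (((hψ' k hk).ofReal_comp).const_mul I).continuousAt.continuousWithinAt
  have hE_cont : ContinuousOn (fun k ↦ exp (I * ψ k)) (Icc a b) :=
    fun k hk ↦ (hE k hk).continuousAt.continuousWithinAt
  have hJ_cont : ContinuousOn (fun k ↦ (I * ψ' k)⁻¹) (Icc a b) :=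
    fun k hk ↦ (hJ k hk).continuousAt.continuousWithinAt
  have hQ_int := intervalIntegrable_deriv_div_sq hab hψ' hne hψ''_nonneg
  have hu : ∀ k ∈ Ioo (min a b) (max a b), HasDerivAt (fun k ↦ A k * (I * ψ' k)⁻¹)
      (A' k * (I * ψ' k)⁻¹ + A k * (I * ((ψ'' k / ψ' k ^ 2 : ℝ) : ℂ))) k := by
    rw [hIoo]; exact fun k hk ↦ (hA' k hk).mul (hJ k (Ioo_subset_Icc_self hk))
  have hv : ∀ k ∈ Ioo (min a b) (max a b), HasDerivAt (fun k ↦ exp (I * ψ k))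
      (exp (I * ψ k) * (I * ψ' k)) k := by
    rw [hIoo]; exact fun k hk ↦ hE k (Ioo_subset_Icc_self hk)
  have hu_int : IntervalIntegrable
      (fun k ↦ A' k * (I * ψ' k)⁻¹ + A k * (I * ((ψ'' k / ψ' k ^ 2 : ℝ) : ℂ))) volume a b :=
    (hA'_int.mul_continuousOn (hIcc ▸ hJ_cont)).add
      ((IntervalIntegrable.const_mul ⟨hQ_int.1.ofReal, hQ_int.2.ofReal⟩ I).continuousOn_mul
        (hIcc ▸ hA))
  have hv_int : IntervalIntegrable (fun k ↦ exp (I * ψ k) * (I * ψ' k)) volume a b :=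
    ((hE_cont.mul hψ'_cont).mono hIcc.subset).intervalIntegrable
  have hparts := intervalIntegral.integral_mul_deriv_eq_deriv_mul_of_hasDerivAt
    (hIcc ▸ hA.mul hJ_cont) (hIcc ▸ hE_cont) hu hv hu_int hv_int
  rw [← hparts]
  refine intervalIntegral.integral_congr fun k hk ↦ ?_
  have : (ψ' k : ℂ) ≠ 0 := ofReal_ne_zero.2 (hne k (hIcc ▸ hk))
  field_simp

theorem norm_integral_mul_exp_I_le_of_le_abs_deriv (hab : a ≤ b) (hμ : 0 < μ)
    (hψ : ∀ k ∈ Icc a b, HasDerivAt ψ (ψ' k) k) (hψ' : ∀ k ∈ Icc a b, HasDerivAt ψ' (ψ'' k) k)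
    (hψ''_nonneg : ∀ k ∈ Icc a b, 0 ≤ ψ'' k) (hψ'_ge : ∀ k ∈ Icc a b, μ ≤ |ψ' k|)
    (hA : ContinuousOn A (Icc a b)) (hA' : ∀ k ∈ Ioo a b, HasDerivAt A (A' k) k)
    (hA'_int : IntervalIntegrable A' volume a b) (hM : ∀ k ∈ Icc a b, ‖A k‖ ≤ M) :
    ‖∫ k in a..b, A k * exp (I * ψ k)‖ ≤ (4 * M + ∫ k in a..b, ‖A' k‖) / μ := by
  have hM0 : 0 ≤ M := (norm_nonneg _).trans (hM a (left_mem_Icc.2 hab))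
  have hne : ∀ k ∈ Icc a b, ψ' k ≠ 0 := fun k hk h ↦ by
    have := hψ'_ge k hk; rw [h, abs_zero] at this; linarith
  have hinv : ∀ k ∈ Icc a b, |ψ' k|⁻¹ ≤ μ⁻¹ := fun k hk ↦ inv_anti₀ hμ (hψ'_ge k hk)
  have hJ : ∀ k ∈ Icc a b, ‖(I * (ψ' k : ℂ))⁻¹‖ ≤ μ⁻¹ := fun k hk ↦ by
    simpa [norm_inv] using hinv k hk
  have hboundary : ∀ k ∈ Icc a b, ‖A k * (I * ψ' k)⁻¹ * exp (I * ψ k)‖ ≤ M / μ := fun k hk ↦ by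
    rw [norm_mul, norm_mul, norm_exp_I_mul_ofReal, mul_one, div_eq_mul_inv]
    exact mul_le_mul (hM k hk) (hJ k hk) (norm_nonneg _) hM0
  have hQ_int := intervalIntegrable_deriv_div_sq hab hψ' hne hψ''_nonneg
  have hQ_le : ∫ k in a..b, ψ'' k / ψ' k ^ 2 ≤ 2 / μ := by
    rw [integral_deriv_div_sq hab hψ' hne hψ''_nonneg]
    have ha := abs_le.1 ((abs_inv _).trans_le (hinv a (left_mem_Icc.2 hab)))
    have hb := abs_le.1 ((abs_inv _).trans_le (hinv b (right_mem_Icc.2 hab)))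
    rw [div_eq_mul_inv]; linarith
  have hpointwise : ∀ k ∈ Icc a b,
      ‖(A' k * (I * ψ' k)⁻¹ + A k * (I * ((ψ'' k / ψ' k ^ 2 : ℝ) : ℂ))) * exp (I * ψ k)‖ ≤
        ‖A' k‖ * μ⁻¹ + M * (ψ'' k / ψ' k ^ 2) := fun k hk ↦ by
    have hQ : 0 ≤ ψ'' k / ψ' k ^ 2 := div_nonneg (hψ''_nonneg k hk) (sq_nonneg _)
    rw [norm_mul, norm_exp_I_mul_ofReal, mul_one]
    refine (norm_add_le _ _).trans (add_le_add ?_ ?_)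
    · rw [norm_mul]; exact mul_le_mul_of_nonneg_left (hJ k hk) (norm_nonneg _)
    · rw [norm_mul, norm_mul, norm_I, one_mul, norm_real, Real.norm_of_nonneg hQ]
      exact mul_le_mul_of_nonneg_right (hM k hk) hQ
  have hbulk : ‖∫ k in a..b, (A' k * (I * ψ' k)⁻¹ + A k * (I * ((ψ'' k / ψ' k ^ 2 : ℝ) : ℂ))) *
      exp (I * ψ k)‖ ≤ (∫ k in a..b, ‖A' k‖) * μ⁻¹ + M * (2 / μ) := by
    refine (intervalIntegral.norm_integral_le_of_norm_le hab
      (Eventually.of_forall fun k hk ↦ hpointwise k (Ioc_subset_Icc_self hk))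
      ((hA'_int.norm.mul_const _).add (hQ_int.const_mul _))).trans ?_
    rw [intervalIntegral.integral_add (hA'_int.norm.mul_const _) (hQ_int.const_mul _),
      intervalIntegral.integral_mul_const, intervalIntegral.integral_const_mul]
    gcongr
  rw [integral_mul_exp_I_eq_by_parts hab hψ hψ' hne hψ''_nonneg hA hA' hA'_int]
  calc _ ≤ ‖A b * (I * ψ' b)⁻¹ * exp (I * ψ b)‖ + ‖A a * (I * ψ' a)⁻¹ * exp (I * ψ a)‖ +
        ‖∫ k in a..b, (A' k * (I * ψ' k)⁻¹ + A k * (I * ((ψ'' k / ψ' k ^ 2 : ℝ) : ℂ))) *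
          exp (I * ψ k)‖ := (norm_sub_le _ _).trans (by gcongr; exact norm_sub_le _ _)
    _ ≤ M / μ + M / μ + ((∫ k in a..b, ‖A' k‖) * μ⁻¹ + M * (2 / μ)) := by
        gcongr
        exacts [hboundary b (right_mem_Icc.2 hab), hboundary a (left_mem_Icc.2 hab)]
    _ = _ := by ring

theorem norm_integral_mul_exp_I_le_of_norm_le (hab : a ≤ b) (hM : ∀ k ∈ Icc a b, ‖A k‖ ≤ M) :
    ‖∫ k in a..b, A k * exp (I * ψ k)‖ ≤ M * (b - a) := by
  refine (intervalIntegral.norm_integral_le_of_norm_le_const fun k hk ↦ ?_).trans_eq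
    (by rw [abs_of_nonneg (sub_nonneg.2 hab)])
  rw [uIoc_of_le hab] at hk
  rw [norm_mul, norm_exp_I_mul_ofReal, mul_one]
  exact hM k (Ioc_subset_Icc_self hk)

theorem norm_integral_mul_exp_I_le_of_le_abs_deriv_on_subinterval {u v : ℝ} (hau : a ≤ u)
    (huv : u ≤ v) (hvb : v ≤ b) (hμ : 0 < μ)
    (hψ : ∀ k ∈ Icc a b, HasDerivAt ψ (ψ' k) k) (hψ' : ∀ k ∈ Icc a b, HasDerivAt ψ' (ψ'' k) k)
    (hψ''_nonneg : ∀ k ∈ Icc a b, 0 ≤ ψ'' k) (hψ'_ge : ∀ k ∈ Icc u v, μ ≤ |ψ' k|)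
    (hA : ContinuousOn A (Icc a b)) (hA' : ∀ k ∈ Ioo a b, HasDerivAt A (A' k) k)
    (hA'_int : IntervalIntegrable A' volume a b) (hM : ∀ k ∈ Icc a b, ‖A k‖ ≤ M) :
    ‖∫ k in a..b, A k * exp (I * ψ k)‖ ≤
      M * (u - a + (b - v)) + (4 * M + ∫ k in a..b, ‖A' k‖) / μ := by
  have hab : a ≤ b := (hau.trans huv).trans hvb
  have hsub : Icc u v ⊆ Icc a b := Icc_subset_Icc hau hvb
  have hint : ContinuousOn (fun k ↦ A k * exp (I * ψ k)) (Icc a b) :=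
    hA.mul (continuous_exp.comp_continuousOn ((continuous_ofReal.comp_continuousOn
      fun k hk ↦ (hψ k hk).continuousAt.continuousWithinAt).const_smul I))
  have hint_on : ∀ {x y}, a ≤ x → x ≤ y → y ≤ b →
      IntervalIntegrable (fun k ↦ A k * exp (I * ψ k)) volume x y := fun hax hxy hyb ↦
    (hint.mono (Icc_subset_Icc hax hyb)).intervalIntegrable_of_Icc hxy
  rw [← intervalIntegral.integral_add_adjacent_intervals (b := u)
      (hint_on le_rfl hau (huv.trans hvb)) (hint_on hau (huv.trans hvb) le_rfl),
    ← intervalIntegral.integral_add_adjacent_intervals (b := v) (hint_on hau huv hvb)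
      (hint_on (hau.trans huv) hvb le_rfl)]
  have hleft := norm_integral_mul_exp_I_le_of_norm_le (ψ := ψ) hau
    fun k hk ↦ hM k (Icc_subset_Icc_right (huv.trans hvb) hk)
  have hright := norm_integral_mul_exp_I_le_of_norm_le (ψ := ψ) hvb
    fun k hk ↦ hM k (Icc_subset_Icc_left (hau.trans huv) hk)
  have hmiddle := norm_integral_mul_exp_I_le_of_le_abs_deriv huv hμ
    (fun k hk ↦ hψ k (hsub hk)) (fun k hk ↦ hψ' k (hsub hk))
    (fun k hk ↦ hψ''_nonneg k (hsub hk)) hψ'_ge (hA.mono hsub)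
    (fun k hk ↦ hA' k (Ioo_subset_Ioo hau hvb hk))
    (hA'_int.mono_set (by rw [uIcc_of_le huv, uIcc_of_le hab]; exact hsub))
    (fun k hk ↦ hM k (hsub hk))
  have hV : ∫ k in u..v, ‖A' k‖ ≤ ∫ k in a..b, ‖A' k‖ :=
    intervalIntegral.integral_mono_interval hau huv hvb
      (Eventually.of_forall fun _ ↦ norm_nonneg _) hA'_int.norm
  have hV' : (4 * M + ∫ k in u..v, ‖A' k‖) / μ ≤ (4 * M + ∫ k in a..b, ‖A' k‖) / μ := by
    gcongr
  refine (norm_add_le _ _).trans ((add_le_add_right (norm_add_le _ _) _).trans ?_)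
  linarith

theorem norm_integral_mul_exp_I_le_of_deriv_nonneg_left (hab : a ≤ b) (hμ : 0 < μ)
    (hψ : ∀ k ∈ Icc a b, HasDerivAt ψ (ψ' k) k) (hψ' : ∀ k ∈ Icc a b, HasDerivAt ψ' (ψ'' k) k)
    (hψ'' : ∀ k ∈ Icc a b, μ ^ 2 ≤ ψ'' k) (hψ'a : 0 ≤ ψ' a)
    (hA : ContinuousOn A (Icc a b)) (hA' : ∀ k ∈ Ioo a b, HasDerivAt A (A' k) k)
    (hA'_int : IntervalIntegrable A' volume a b) (hM : ∀ k ∈ Icc a b, ‖A k‖ ≤ M) :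
    ‖∫ k in a..b, A k * exp (I * ψ k)‖ ≤ (5 * M + ∫ k in a..b, ‖A' k‖) / μ := by
  have hM0 : 0 ≤ M := (norm_nonneg _).trans (hM a (left_mem_Icc.2 hab))
  have hV0 : 0 ≤ ∫ k in a..b, ‖A' k‖ :=
    intervalIntegral.integral_nonneg hab fun _ _ ↦ norm_nonneg _
  by_cases hshort : b ≤ a + μ⁻¹
  · calc _ ≤ M * (b - a) := norm_integral_mul_exp_I_le_of_norm_le hab hM
      _ ≤ M * μ⁻¹ := mul_le_mul_of_nonneg_left (by linarith) hM0
      _ ≤ _ := by rw [div_eq_mul_inv]; gcongr; linarith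
  push Not at hshort
  have hac : a ≤ a + μ⁻¹ := by linarith [inv_pos.2 hμ]
  have hfar : ∀ k ∈ Icc (a + μ⁻¹) b, μ ≤ |ψ' k| := fun k hk ↦ by
    have hslope := mul_sub_le_sub_of_le_hasDerivAt hψ' hψ'' (left_mem_Icc.2 hab)
      (Icc_subset_Icc_left hac hk) (hac.trans hk.1)
    have hmono : μ ^ 2 * μ⁻¹ ≤ μ ^ 2 * (k - a) := by gcongr; linarith [hk.1]
    have hμμ : μ ^ 2 * μ⁻¹ = μ := by field_simp
    exact (by linarith : μ ≤ ψ' k).trans (le_abs_self _)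
  calc _ ≤ M * (a + μ⁻¹ - a + (b - b)) + (4 * M + ∫ k in a..b, ‖A' k‖) / μ :=
        norm_integral_mul_exp_I_le_of_le_abs_deriv_on_subinterval hac hshort.le le_rfl hμ hψ
          hψ' (fun k hk ↦ (sq_nonneg μ).trans (hψ'' k hk)) hfar hA hA' hA'_int hM
    _ = _ := by field_simp; ring

theorem norm_integral_mul_exp_I_le_of_deriv_nonpos_right (hab : a ≤ b) (hμ : 0 < μ)
    (hψ : ∀ k ∈ Icc a b, HasDerivAt ψ (ψ' k) k) (hψ' : ∀ k ∈ Icc a b, HasDerivAt ψ' (ψ'' k) k)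
    (hψ'' : ∀ k ∈ Icc a b, μ ^ 2 ≤ ψ'' k) (hψ'b : ψ' b ≤ 0)
    (hA : ContinuousOn A (Icc a b)) (hA' : ∀ k ∈ Ioo a b, HasDerivAt A (A' k) k)
    (hA'_int : IntervalIntegrable A' volume a b) (hM : ∀ k ∈ Icc a b, ‖A k‖ ≤ M) :
    ‖∫ k in a..b, A k * exp (I * ψ k)‖ ≤ (5 * M + ∫ k in a..b, ‖A' k‖) / μ := by
  have hM0 : 0 ≤ M := (norm_nonneg _).trans (hM a (left_mem_Icc.2 hab))
  have hV0 : 0 ≤ ∫ k in a..b, ‖A' k‖ :=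
    intervalIntegral.integral_nonneg hab fun _ _ ↦ norm_nonneg _
  by_cases hshort : b - μ⁻¹ ≤ a
  · calc _ ≤ M * (b - a) := norm_integral_mul_exp_I_le_of_norm_le hab hM
      _ ≤ M * μ⁻¹ := mul_le_mul_of_nonneg_left (by linarith) hM0
      _ ≤ _ := by rw [div_eq_mul_inv]; gcongr; linarith
  push Not at hshort
  have hcb : b - μ⁻¹ ≤ b := by linarith [inv_pos.2 hμ]
  have hfar : ∀ k ∈ Icc a (b - μ⁻¹), μ ≤ |ψ' k| := fun k hk ↦ by
    have hslope := mul_sub_le_sub_of_le_hasDerivAt hψ' hψ'' (Icc_subset_Icc_right hcb hk)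
      (right_mem_Icc.2 hab) (hk.2.trans hcb)
    have hmono : μ ^ 2 * μ⁻¹ ≤ μ ^ 2 * (b - k) := by gcongr; linarith [hk.2]
    have hμμ : μ ^ 2 * μ⁻¹ = μ := by field_simp
    exact (by linarith : μ ≤ -ψ' k).trans (neg_le_abs _)
  calc _ ≤ M * (a - a + (b - (b - μ⁻¹))) + (4 * M + ∫ k in a..b, ‖A' k‖) / μ :=
        norm_integral_mul_exp_I_le_of_le_abs_deriv_on_subinterval le_rfl hshort.le hcb hμ hψ
          hψ' (fun k hk ↦ (sq_nonneg μ).trans (hψ'' k hk)) hfar hA hA' hA'_int hM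
    _ = _ := by field_simp; ring

theorem norm_integral_mul_exp_I_le_of_sq_le_deriv2 (hab : a ≤ b) (hμ : 0 < μ)
    (hψ : ∀ k ∈ Icc a b, HasDerivAt ψ (ψ' k) k) (hψ' : ∀ k ∈ Icc a b, HasDerivAt ψ' (ψ'' k) k)
    (hψ'' : ∀ k ∈ Icc a b, μ ^ 2 ≤ ψ'' k)
    (hA : ContinuousOn A (Icc a b)) (hA' : ∀ k ∈ Ioo a b, HasDerivAt A (A' k) k)
    (hA'_int : IntervalIntegrable A' volume a b) (hM : ∀ k ∈ Icc a b, ‖A k‖ ≤ M) :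
    ‖∫ k in a..b, A k * exp (I * ψ k)‖ ≤ (10 * M + ∫ k in a..b, ‖A' k‖) / μ := by
  have hM0 : 0 ≤ M := (norm_nonneg _).trans (hM a (left_mem_Icc.2 hab))
  have hweaken : (5 * M + ∫ k in a..b, ‖A' k‖) / μ ≤ (10 * M + ∫ k in a..b, ‖A' k‖) / μ := by
    gcongr; linarith
  rcases le_or_gt 0 (ψ' a) with hψ'a | hψ'a
  · exact (norm_integral_mul_exp_I_le_of_deriv_nonneg_left hab hμ hψ hψ' hψ'' hψ'a hA hA'
      hA'_int hM).trans hweaken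
  rcases le_or_gt (ψ' b) 0 with hψ'b | hψ'b
  · exact (norm_integral_mul_exp_I_le_of_deriv_nonpos_right hab hμ hψ hψ' hψ'' hψ'b hA hA'
      hA'_int hM).trans hweaken
  obtain ⟨x, hx, hψ'x⟩ : ∃ x ∈ Icc a b, ψ' x = 0 :=
    intermediate_value_Icc hab (fun k hk ↦ (hψ' k hk).continuousAt.continuousWithinAt)
      ⟨hψ'a.le, hψ'b.le⟩
  have hl : Icc a x ⊆ Icc a b := Icc_subset_Icc_right hx.2
  have hr : Icc x b ⊆ Icc a b := Icc_subset_Icc_left hx.1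
  have hint : ContinuousOn (fun k ↦ A k * exp (I * ψ k)) (Icc a b) :=
    hA.mul (continuous_exp.comp_continuousOn ((continuous_ofReal.comp_continuousOn
      fun k hk ↦ (hψ k hk).continuousAt.continuousWithinAt).const_smul I))
  have hA'_int_on : ∀ {u v}, Icc u v ⊆ Icc a b → u ≤ v → IntervalIntegrable A' volume u v :=
    fun h huv ↦ hA'_int.mono_set (by rw [uIcc_of_le huv, uIcc_of_le hab]; exact h)
  rw [← intervalIntegral.integral_add_adjacent_intervals
      ((hint.mono hl).intervalIntegrable_of_Icc hx.1)
      ((hint.mono hr).intervalIntegrable_of_Icc hx.2),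
    ← intervalIntegral.integral_add_adjacent_intervals (hA'_int_on hl hx.1).norm
      (hA'_int_on hr hx.2).norm]
  have hleft := norm_integral_mul_exp_I_le_of_deriv_nonpos_right hx.1 hμ
    (fun k hk ↦ hψ k (hl hk)) (fun k hk ↦ hψ' k (hl hk)) (fun k hk ↦ hψ'' k (hl hk))
    hψ'x.le (hA.mono hl) (fun k hk ↦ hA' k (Ioo_subset_Ioo_right hx.2 hk))
    (hA'_int_on hl hx.1) (fun k hk ↦ hM k (hl hk))
  have hright := norm_integral_mul_exp_I_le_of_deriv_nonneg_left hx.2 hμ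
    (fun k hk ↦ hψ k (hr hk)) (fun k hk ↦ hψ' k (hr hk)) (fun k hk ↦ hψ'' k (hr hk))
    hψ'x.ge (hA.mono hr) (fun k hk ↦ hA' k (Ioo_subset_Ioo_left hx.1 hk))
    (hA'_int_on hr hx.2) (fun k hk ↦ hM k (hr hk))
  refine (norm_add_le _ _).trans ((add_le_add hleft hright).trans_eq ?_)
  ring

theorem norm_integral_mul_exp_I_le_of_deriv2_le_neg_sq (hab : a ≤ b) (hμ : 0 < μ)
    (hψ : ∀ k ∈ Icc a b, HasDerivAt ψ (ψ' k) k) (hψ' : ∀ k ∈ Icc a b, HasDerivAt ψ' (ψ'' k) k)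
    (hψ'' : ∀ k ∈ Icc a b, ψ'' k ≤ -μ ^ 2)
    (hA : ContinuousOn A (Icc a b)) (hA' : ∀ k ∈ Ioo a b, HasDerivAt A (A' k) k)
    (hA'_int : IntervalIntegrable A' volume a b) (hM : ∀ k ∈ Icc a b, ‖A k‖ ≤ M) :
    ‖∫ k in a..b, A k * exp (I * ψ k)‖ ≤ (10 * M + ∫ k in a..b, ‖A' k‖) / μ := by
  -- Complex conjugation reverses the sign of the phase.
  have hconj : ∫ k in a..b, A k * exp (I * ψ k) =
      conj (∫ k in a..b, conj (A k) * exp (I * ((-ψ k : ℝ) : ℂ))) := by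
    rw [← intervalIntegral.intervalIntegral_conj]
    congr 1 with k
    rw [map_mul, conj_conj, ← exp_conj, map_mul, conj_I, conj_ofReal]
    push_cast
    ring_nf
  have hbound := norm_integral_mul_exp_I_le_of_sq_le_deriv2 (A := fun k ↦ conj (A k))
    (A' := fun k ↦ conj (A' k)) (ψ := fun k ↦ -ψ k) (ψ' := fun k ↦ -ψ' k)
    (ψ'' := fun k ↦ -ψ'' k) hab hμ (fun k hk ↦ (hψ k hk).neg) (fun k hk ↦ (hψ' k hk).neg)
    (fun k hk ↦ by linarith [hψ'' k hk]) hA.star (fun k hk ↦ (hA' k hk).star)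
    ⟨(conjCLE : ℂ →L[ℝ] ℂ).integrable_comp hA'_int.1,
      (conjCLE : ℂ →L[ℝ] ℂ).integrable_comp hA'_int.2⟩
    (fun k hk ↦ by simpa using hM k hk)
  simpa [hconj] using hbound

end VanDerCorput

theorem norm_integral_Ioi_one_le_of_dyadic {E : Type*} [NormedAddCommGroup E]
    [NormedSpace ℝ E] {f : ℝ → E} (hf : IntegrableOn f (Ioi 1)) {B β : ℝ} (hβ : 0 < β)
    (hblock : ∀ a : ℝ, 1 ≤ a → ‖∫ k in a..2 * a, f k‖ ≤ B * a ^ (-β)) :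
    ‖∫ k in Ioi 1, f k‖ ≤ B / (1 - 2 ^ (-β)) := by
  set r : ℝ := 2 ^ (-β)
  have hr0 : 0 ≤ r := by positivity
  have hr1 : r < 1 := Real.rpow_lt_one_of_one_lt_of_neg one_lt_two (by linarith)
  have hpow : ∀ j : ℕ, (1 : ℝ) ≤ 2 ^ j := fun j ↦ one_le_pow₀ one_le_two
  have hpartial : ∀ n : ℕ, ‖∫ k in (1 : ℝ)..2 ^ n, f k‖ ≤ B / (1 - r) := by
    intro n
    have hB : 0 ≤ B := by
      have := (norm_nonneg _).trans (hblock 1 le_rfl); rwa [Real.one_rpow, mul_one] at this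
    rw [← pow_zero (2 : ℝ), ← intervalIntegral.sum_integral_adjacent_intervals fun j _ ↦
      (intervalIntegrable_iff_integrableOn_Ioc_of_le
        (pow_le_pow_right₀ one_le_two j.le_succ)).2
          (hf.mono_set (Ioc_subset_Ioi_self.trans (Ioi_subset_Ioi (hpow j))))]
    calc _ ≤ ∑ j ∈ Finset.range n, ‖∫ k in (2 : ℝ) ^ j..2 ^ (j + 1), f k‖ := norm_sum_le _ _
      _ ≤ ∑ j ∈ Finset.range n, B * r ^ j := Finset.sum_le_sum fun j _ ↦ by
        have hr : ((2 : ℝ) ^ j) ^ (-β) = r ^ j := by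
          rw [← Real.rpow_natCast, ← Real.rpow_mul zero_le_two, mul_comm,
            Real.rpow_mul zero_le_two, Real.rpow_natCast]
        simpa only [← pow_succ', hr] using hblock _ (hpow j)
      _ ≤ B / (1 - r) := by
        rw [← Finset.mul_sum, div_eq_mul_one_div]
        gcongr
        simpa using geom_sum_Ico_le_of_lt_one (m := 0) (n := n) hr0 hr1
  exact le_of_tendsto (intervalIntegral_tendsto_integral_Ioi 1 hf
    (tendsto_pow_atTop_atTop_of_one_lt one_lt_two)).norm (Eventually.of_forall hpartial)

theorem norm_integral_mul_le_of_wienerRep1 {μ : Measure ℝ} [SFinite μ] {G g gh : ℝ → ℂ}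
    {c : ℂ} {B : ℝ} (hG : Integrable G μ) (hg : WienerRep1 g c gh)
    (hB : ∀ q : ℝ, ‖∫ k, G k * exp (I * k * q) ∂μ‖ ≤ B) :
    ‖∫ k, G k * g k ∂μ‖ ≤ (‖c‖ + ∫ q, ‖gh q‖) * B := by
  obtain ⟨hgh, hg⟩ := hg
  set H : ℝ × ℝ → ℂ := fun z ↦ G z.1 * exp (I * z.1 * z.2) * gh z.2
  have hH : Integrable H (μ.prod volume) := by
    refine (hG.norm.mul_prod hgh.norm).mono' ?_ (Eventually.of_forall fun z ↦ ?_)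
    · refine (hG.1.comp_fst.mul (Continuous.aestronglyMeasurable ?_)).mul hgh.1.comp_snd
      fun_prop
    · rw [norm_mul, norm_mul, mul_assoc I, ← ofReal_mul, norm_exp_I_mul_ofReal, mul_one]
  have hsplit : ∫ k, G k * g k ∂μ =
      c * ∫ k, G k ∂μ + ∫ q, gh q * ∫ k, G k * exp (I * k * q) ∂μ := by
    have hpt : ∀ k, G k * g k = c * G k + ∫ q, H (k, q) := fun k ↦ by
      rw [hg k, mul_add, mul_comm (G k) c, ← integral_const_mul]
      exact congrArg _ (integral_congr_ae (Eventually.of_forall fun q ↦ by simp only [H]; ring))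
    rw [integral_congr_ae (Eventually.of_forall hpt), integral_add (hG.const_mul c)
      hH.integral_prod_left, integral_const_mul,
      integral_integral_swap (f := fun k q ↦ H (k, q)) hH]
    refine congrArg _ (integral_congr_ae (Eventually.of_forall fun q ↦ ?_))
    dsimp only
    rw [← integral_const_mul]
    exact integral_congr_ae (Eventually.of_forall fun k ↦ by simp only [H]; ring)
  have hG0 : ‖∫ k, G k ∂μ‖ ≤ B := by simpa using hB 0
  rw [hsplit]
  refine (norm_add_le _ _).trans ?_
  rw [norm_mul, add_mul]
  gcongr
  refine (norm_integral_le_integral_norm _).trans ?_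
  rw [← integral_mul_const]
  refine integral_mono_of_nonneg (Eventually.of_forall fun _ ↦ norm_nonneg _)
    (hgh.norm.mul_const _) (Eventually.of_forall fun q ↦ ?_)
  dsimp only
  rw [norm_mul]
  exact mul_le_mul_of_nonneg_left (hB q) (norm_nonneg _)

def kleinGordonPhase (m s p k : ℝ) : ℝ := s * √(k ^ 2 + m ^ 2) + k * p

theorem continuous_kleinGordonPhase (m s p : ℝ) : Continuous (kleinGordonPhase m s p) := by
  unfold kleinGordonPhase; fun_prop

theorem kleinGordonPhase_add (m s p q k : ℝ) :
    kleinGordonPhase m s (p + q) k = kleinGordonPhase m s p k + k * q := by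
  unfold kleinGordonPhase; ring

theorem hasDerivAt_sqrt_sq_add_sq {m : ℝ} (hm : m ≠ 0) (k : ℝ) :
    HasDerivAt (fun k ↦ √(k ^ 2 + m ^ 2)) (k / √(k ^ 2 + m ^ 2)) k := by
  have hX : k ^ 2 + m ^ 2 ≠ 0 := by positivity
  refine (((hasDerivAt_pow 2 k).add_const (m ^ 2)).sqrt hX).congr_deriv ?_
  field_simp
  norm_num

theorem hasDerivAt_kleinGordonPhase {m : ℝ} (hm : m ≠ 0) (s p k : ℝ) :
    HasDerivAt (kleinGordonPhase m s p) (s * (k / √(k ^ 2 + m ^ 2)) + p) k := by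
  have h := ((hasDerivAt_sqrt_sq_add_sq hm k).const_mul s).add ((hasDerivAt_id' k).mul_const p)
  rwa [one_mul] at h

theorem hasDerivAt_kleinGordonPhase_deriv {m : ℝ} (hm : m ≠ 0) (s p k : ℝ) :
    HasDerivAt (fun k ↦ s * (k / √(k ^ 2 + m ^ 2)) + p)
      (s * (m ^ 2 / ((k ^ 2 + m ^ 2) * √(k ^ 2 + m ^ 2)))) k := by
  have hX : 0 < k ^ 2 + m ^ 2 := by positivity
  have hS : √(k ^ 2 + m ^ 2) ≠ 0 := (Real.sqrt_pos.2 hX).ne'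
  refine ((((hasDerivAt_id k).div (hasDerivAt_sqrt_sq_add_sq hm k) hS).const_mul s).add_const
    p).congr_deriv ?_
  have hSS := Real.mul_self_sqrt hX.le
  field_simp
  simp only [id, Real.sq_sqrt hX.le]
  ring

theorem div_le_kleinGordon_curvature {m a k : ℝ} (hm : m ≠ 0) (ha : 1 ≤ a)
    (hk : k ∈ Icc a (2 * a)) :
    m ^ 2 / (√(4 + m ^ 2) * a) ^ 3 ≤ m ^ 2 / ((k ^ 2 + m ^ 2) * √(k ^ 2 + m ^ 2)) := by
  have hk0 : 0 ≤ k := by linarith [hk.1]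
  have hX : k ^ 2 + m ^ 2 ≤ (√(4 + m ^ 2) * a) ^ 2 := by
    rw [mul_pow, Real.sq_sqrt (by positivity)]
    nlinarith [hk.2, mul_le_mul_of_nonneg_left (one_le_pow₀ (n := 2) ha) (sq_nonneg m)]
  have hS : √(k ^ 2 + m ^ 2) ≤ √(4 + m ^ 2) * a := by
    simpa [Real.sqrt_sq (by positivity : 0 ≤ √(4 + m ^ 2) * a)] using Real.sqrt_le_sqrt hX
  gcongr
  rw [pow_three', ← sq]; exact mul_le_mul hX hS (Real.sqrt_nonneg _) (by positivity)

section Amplitude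

variable {η : ℝ → ℂ}

theorem hasDerivAt_mul_rpow_neg (hη : ContDiffOn ℝ 1 η (Ici 1)) (α : ℝ) {k : ℝ} (hk : 1 < k) :
    HasDerivAt (fun k ↦ η k * ((k ^ (-α) : ℝ) : ℂ))
      (deriv η k * ((k ^ (-α) : ℝ) : ℂ) + η k * ((-α * k ^ (-α - 1) : ℝ) : ℂ)) k :=
  (((hη.differentiableOn one_ne_zero).differentiableAt (Ici_mem_nhds hk)).hasDerivAt).mul
    (Real.hasDerivAt_rpow_const (Or.inl (by positivity))).ofReal_comp

theorem norm_mul_rpow_neg_le (hη_le : ∀ k : ℝ, 1 ≤ k → ‖η k‖ ≤ 1) {α a k : ℝ} (hα : 0 ≤ α)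
    (ha : 1 ≤ a) (hk : a ≤ k) : ‖η k * ((k ^ (-α) : ℝ) : ℂ)‖ ≤ a ^ (-α) := by
  have hk0 : 0 < k := by linarith
  rw [norm_mul, norm_real, Real.norm_of_nonneg (by positivity)]
  calc ‖η k‖ * k ^ (-α) ≤ 1 * k ^ (-α) := by gcongr; exact hη_le k (ha.trans hk)
    _ ≤ a ^ (-α) := by
      rw [one_mul]; exact Real.rpow_le_rpow_of_nonpos (by linarith) hk (by linarith)

theorem norm_deriv_mul_rpow_neg_le (hη_le : ∀ k : ℝ, 1 ≤ k → ‖η k‖ ≤ 1)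
    (hη'_le : ∀ k : ℝ, 1 ≤ k → ‖deriv η k‖ ≤ k⁻¹) {α a k : ℝ} (hα : 0 ≤ α) (ha : 1 ≤ a)
    (hk : a ≤ k) :
    ‖deriv η k * ((k ^ (-α) : ℝ) : ℂ) + η k * ((-α * k ^ (-α - 1) : ℝ) : ℂ)‖ ≤
      (1 + α) * a ^ (-α - 1) := by
  have hk0 : 0 < k := by linarith
  have hk1 : 1 ≤ k := ha.trans hk
  have hrpow : k⁻¹ * k ^ (-α) = k ^ (-α - 1) := by
    rw [← Real.rpow_neg_one, ← Real.rpow_add hk0]; ring_nf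
  refine (norm_add_le _ _).trans ?_
  rw [norm_mul, norm_mul, norm_real, norm_real, Real.norm_of_nonneg (by positivity),
    Real.norm_eq_abs, abs_mul, abs_neg, abs_of_nonneg hα, abs_of_nonneg (by positivity)]
  calc ‖deriv η k‖ * k ^ (-α) + ‖η k‖ * (α * k ^ (-α - 1))
      ≤ k⁻¹ * k ^ (-α) + 1 * (α * k ^ (-α - 1)) := by
        gcongr
        · exact hη'_le k hk1
        · exact hη_le k hk1
    _ = (1 + α) * k ^ (-α - 1) := by rw [hrpow]; ring
    _ ≤ (1 + α) * a ^ (-α - 1) :=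
        mul_le_mul_of_nonneg_left (Real.rpow_le_rpow_of_nonpos (by linarith) hk (by linarith))
          (by linarith)

theorem intervalIntegrable_deriv_mul_rpow_neg (hη : ContDiffOn ℝ 1 η (Ici 1))
    (hη_le : ∀ k : ℝ, 1 ≤ k → ‖η k‖ ≤ 1) (hη'_le : ∀ k : ℝ, 1 ≤ k → ‖deriv η k‖ ≤ k⁻¹)
    {α a b : ℝ} (hα : 0 ≤ α) (ha : 1 ≤ a) (hab : a ≤ b) :
    IntervalIntegrable (fun k ↦ deriv η k * ((k ^ (-α) : ℝ) : ℂ) +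
      η k * ((-α * k ^ (-α - 1) : ℝ) : ℂ)) volume a b := by
  have hrpow : ∀ c β : ℝ, ContinuousOn (fun k : ℝ ↦ ((c * k ^ β : ℝ) : ℂ)) (Ioc a b) :=
    fun c β ↦ continuous_ofReal.comp_continuousOn (continuousOn_const.mul
      (continuousOn_id.rpow_const fun k hk ↦ Or.inl (by linarith [hk.1] : (0 : ℝ) < k).ne'))
  have hrpow' : ContinuousOn (fun k : ℝ ↦ ((k ^ (-α) : ℝ) : ℂ)) (Ioc a b) := by
    simpa using hrpow 1 (-α)
  refine (intervalIntegrable_iff_integrableOn_Ioc_of_le hab).2 (IntegrableOn.of_bound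
    measure_Ioc_lt_top ?_ _ ((ae_restrict_mem measurableSet_Ioc).mono fun k hk ↦
      norm_deriv_mul_rpow_neg_le hη_le hη'_le hα ha hk.1.le))
  refine ((stronglyMeasurable_deriv η).aestronglyMeasurable.mul ?_).add ?_
  · exact hrpow'.aestronglyMeasurable measurableSet_Ioc
  · exact ((hη.continuousOn.mono fun k hk ↦ ha.trans hk.1.le).mul
      (hrpow _ _)).aestronglyMeasurable measurableSet_Ioc

theorem integral_norm_deriv_mul_rpow_neg_le (hη_le : ∀ k : ℝ, 1 ≤ k → ‖η k‖ ≤ 1)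
    (hη'_le : ∀ k : ℝ, 1 ≤ k → ‖deriv η k‖ ≤ k⁻¹) {α a : ℝ} (hα : 0 ≤ α) (ha : 1 ≤ a) :
    ∫ k in a..2 * a,
        ‖deriv η k * ((k ^ (-α) : ℝ) : ℂ) + η k * ((-α * k ^ (-α - 1) : ℝ) : ℂ)‖ ≤
      (1 + α) * a ^ (-α) := by
  have ha0 : 0 < a := by linarith
  refine (le_abs_self _).trans ?_
  rw [← Real.norm_eq_abs]
  refine (intervalIntegral.norm_integral_le_of_norm_le_const (C := (1 + α) * a ^ (-α - 1))
    fun k hk ↦ ?_).trans_eq ?_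
  · rw [uIoc_of_le (by linarith)] at hk
    rw [norm_norm]
    exact norm_deriv_mul_rpow_neg_le hη_le hη'_le hα ha hk.1.le
  · rw [Real.rpow_sub_one ha0.ne', abs_of_pos (by linarith : 0 < 2 * a - a)]
    field_simp
    ring

theorem integrableOn_Ioi_mul_rpow_neg_mul_exp_I (hη : ContinuousOn η (Ici 1))
    (hη_le : ∀ k : ℝ, 1 ≤ k → ‖η k‖ ≤ 1) {α : ℝ} (hα : 1 < α) {ψ : ℝ → ℝ} (hψ : Continuous ψ) :
    IntegrableOn (fun k ↦ η k * ((k ^ (-α) : ℝ) : ℂ) * exp (I * ψ k)) (Ioi 1) := by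
  refine (integrableOn_Ioi_rpow_of_lt (by linarith : -α < -1) one_pos).mono' ?_ ?_
  · refine ContinuousOn.aestronglyMeasurable ?_ measurableSet_Ioi
    refine ((hη.mono Ioi_subset_Ici_self).mul (continuous_ofReal.comp_continuousOn
      (continuousOn_id.rpow_const fun k hk ↦ Or.inl (one_pos.trans hk).ne'))).mul ?_
    exact (continuous_exp.comp (continuous_const.mul (continuous_ofReal.comp hψ))).continuousOn
  · filter_upwards [ae_restrict_mem measurableSet_Ioi] with k hk
    rw [norm_mul, norm_exp_I_mul_ofReal, mul_one]
    exact norm_mul_rpow_neg_le hη_le (by linarith) (le_of_lt hk) le_rfl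

theorem norm_integral_dyadic_mul_rpow_neg_mul_exp_I_le (hη : ContDiffOn ℝ 1 η (Ici 1))
    (hη_le : ∀ k : ℝ, 1 ≤ k → ‖η k‖ ≤ 1) (hη'_le : ∀ k : ℝ, 1 ≤ k → ‖deriv η k‖ ≤ k⁻¹)
    {α a μ : ℝ} (hα : 0 ≤ α) (ha : 1 ≤ a) (hμ : 0 < μ) {ψ ψ' ψ'' : ℝ → ℝ}
    (hψ : ∀ k ∈ Icc a (2 * a), HasDerivAt ψ (ψ' k) k)
    (hψ' : ∀ k ∈ Icc a (2 * a), HasDerivAt ψ' (ψ'' k) k)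
    (hψ'' : (∀ k ∈ Icc a (2 * a), μ ^ 2 ≤ ψ'' k) ∨ ∀ k ∈ Icc a (2 * a), ψ'' k ≤ -μ ^ 2) :
    ‖∫ k in a..2 * a, η k * ((k ^ (-α) : ℝ) : ℂ) * exp (I * ψ k)‖ ≤
      (11 + α) * a ^ (-α) / μ := by
  have ha0 : 0 < a := by linarith
  have hab : a ≤ 2 * a := by linarith
  have hA : ContinuousOn (fun k ↦ η k * ((k ^ (-α) : ℝ) : ℂ)) (Icc a (2 * a)) :=
    (hη.continuousOn.mono fun k hk ↦ ha.trans hk.1).mul (continuous_ofReal.comp_continuousOn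
      (continuousOn_id.rpow_const fun k hk ↦ Or.inl (ha0.trans_le hk.1).ne'))
  have hA' := fun k (hk : k ∈ Ioo a (2 * a)) ↦ hasDerivAt_mul_rpow_neg hη α (ha.trans_lt hk.1)
  have hA'_int := intervalIntegrable_deriv_mul_rpow_neg hη hη_le hη'_le hα ha hab
  have hM := fun k (hk : k ∈ Icc a (2 * a)) ↦ norm_mul_rpow_neg_le hη_le hα ha hk.1
  have hvdc := hψ''.elim
    (fun h ↦ norm_integral_mul_exp_I_le_of_sq_le_deriv2 hab hμ hψ hψ' h hA hA' hA'_int hM)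
    (fun h ↦ norm_integral_mul_exp_I_le_of_deriv2_le_neg_sq hab hμ hψ hψ' h hA hA' hA'_int hM)
  refine hvdc.trans ?_
  gcongr
  linarith [integral_norm_deriv_mul_rpow_neg_le hη_le hη'_le hα ha]

end Amplitude

theorem norm_integral_dyadic_kleinGordon_le {m α s : ℝ} (hm : m ≠ 0) (hα : 0 ≤ α) (hs : s ≠ 0)
    {η : ℝ → ℂ} (hη : ContDiffOn ℝ 1 η (Ici 1)) (hη_le : ∀ k : ℝ, 1 ≤ k → ‖η k‖ ≤ 1)
    (hη'_le : ∀ k : ℝ, 1 ≤ k → ‖deriv η k‖ ≤ k⁻¹) (p : ℝ) {a : ℝ} (ha : 1 ≤ a) :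
    ‖∫ k in a..2 * a, η k * ((k ^ (-α) : ℝ) : ℂ) * exp (I * kleinGordonPhase m s p k)‖ ≤
      (11 + α) * √(4 + m ^ 2) ^ (3 / 2 : ℝ) / (|m| * √|s|) * a ^ (3 / 2 - α) := by
  have ha0 : 0 < a := by linarith
  set ρ := √(4 + m ^ 2) * a with hρ
  have hρ0 : 0 < ρ := by positivity
  -- `μ ^ 2 = |s| m² / ρ³` bounds the curvature `|s| m² / (k² + m²)^{3/2}` from below on `[a, 2a]`.
  set μ := |m| * √|s| / ρ ^ (3 / 2 : ℝ) with hμ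
  have hμ_sq : μ ^ 2 = m ^ 2 / ρ ^ 3 * |s| := by
    have hρ_pow : (ρ ^ (3 / 2 : ℝ)) ^ 2 = ρ ^ 3 := by
      rw [← Real.rpow_natCast, ← Real.rpow_mul hρ0.le]; norm_num
    rw [hμ, div_pow, mul_pow, sq_abs, Real.sq_sqrt (abs_nonneg s), hρ_pow]
    ring
  have hcurv : (∀ k ∈ Icc a (2 * a),
      μ ^ 2 ≤ s * (m ^ 2 / ((k ^ 2 + m ^ 2) * √(k ^ 2 + m ^ 2)))) ∨
      ∀ k ∈ Icc a (2 * a), s * (m ^ 2 / ((k ^ 2 + m ^ 2) * √(k ^ 2 + m ^ 2))) ≤ -μ ^ 2 := by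
    rcases hs.lt_or_gt with hs | hs
    · refine Or.inr fun k hk ↦ ?_
      rw [hμ_sq, abs_of_neg hs]
      nlinarith [div_le_kleinGordon_curvature hm ha hk]
    · refine Or.inl fun k hk ↦ ?_
      rw [hμ_sq, abs_of_pos hs, mul_comm]
      exact mul_le_mul_of_nonneg_left (div_le_kleinGordon_curvature hm ha hk) hs.le
  have hconst : a ^ (-α) / μ =
      √(4 + m ^ 2) ^ (3 / 2 : ℝ) / (|m| * √|s|) * a ^ (3 / 2 - α) := by
    rw [hμ, hρ, Real.mul_rpow (Real.sqrt_nonneg _) ha0.le, sub_eq_neg_add, Real.rpow_add ha0]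
    field_simp
  calc _ ≤ (11 + α) * a ^ (-α) / μ :=
        norm_integral_dyadic_mul_rpow_neg_mul_exp_I_le hη hη_le hη'_le hα ha (by positivity)
          (fun k _ ↦ hasDerivAt_kleinGordonPhase hm s p k)
          (fun k _ ↦ hasDerivAt_kleinGordonPhase_deriv hm s p k) hcurv
    _ = _ := by rw [mul_div_assoc, hconst]; ring

theorem norm_integral_Ioi_kleinGordon_le {m α s : ℝ} (hm : m ≠ 0) (hα : 3 / 2 < α) (hs : s ≠ 0)
    {η : ℝ → ℂ} (hη : ContDiffOn ℝ 1 η (Ici 1)) (hη_le : ∀ k : ℝ, 1 ≤ k → ‖η k‖ ≤ 1)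
    (hη'_le : ∀ k : ℝ, 1 ≤ k → ‖deriv η k‖ ≤ k⁻¹) (p : ℝ) :
    ‖∫ k in Ioi 1, η k * ((k ^ (-α) : ℝ) : ℂ) * exp (I * kleinGordonPhase m s p k)‖ ≤
      (11 + α) * √(4 + m ^ 2) ^ (3 / 2 : ℝ) / (|m| * √|s|) / (1 - 2 ^ (-(α - 3 / 2))) :=
  norm_integral_Ioi_one_le_of_dyadic
    (integrableOn_Ioi_mul_rpow_neg_mul_exp_I hη.continuousOn hη_le (by linarith)
      (continuous_kleinGordonPhase m s p))
    (by linarith) fun a ha ↦ by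
      simpa only [neg_sub] using
        norm_integral_dyadic_kleinGordon_le hm (by linarith) hs hη hη_le hη'_le p ha

/-- for `η` smooth on `[1,∞)` with `|η| ≤ 1`, `|η'| ≤ k⁻¹`, `m > 0`,
`α > 3/2` and `g ∈ 𝒜₁`,
`sup_p |∫₁^∞ η(k) k^{−α} e^{±it√(k²+m²)+ikp} g(k) dk| ≤ C(m,α) ‖g‖_{𝒜₁} t^{−1/2}`
for all `t ≥ 1`. -/
theorem high_energy_oscillatory_estimate (m α : ℝ) (hm : 0 < m) (hα : 3 / 2 < α) :
    ∃ C : ℝ, ∀ (η g : ℝ → ℂ) (c : ℂ) (gh : ℝ → ℂ) (t p ε : ℝ),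
      ContDiffOn ℝ 1 η (Set.Ici 1) →
      (∀ k : ℝ, 1 ≤ k → ‖η k‖ ≤ 1) →
      (∀ k : ℝ, 1 ≤ k → ‖deriv η k‖ ≤ k⁻¹) →
      WienerRep1 g c gh →
      1 ≤ t → (ε = 1 ∨ ε = -1) →
      ‖∫ k in Set.Ioi (1:ℝ),
          η k * ((k ^ (-α) : ℝ) : ℂ) *
            Complex.exp (Complex.I * (ε * t * Real.sqrt (k ^ 2 + m ^ 2) + k * p)) * g k‖ ≤
        C * (‖c‖ + ∫ q : ℝ, ‖gh q‖) * t ^ (-(1 / 2 : ℝ)) := by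
  refine ⟨(11 + α) * √(4 + m ^ 2) ^ (3 / 2 : ℝ) / m / (1 - 2 ^ (-(α - 3 / 2))),
    fun η g c gh t p ε hη hη_le hη'_le hg ht hε ↦ ?_⟩
  have hεt : |ε * t| = t := by
    rcases hε with rfl | rfl <;> simp [abs_of_pos (one_pos.trans_le ht)]
  have hεt0 : ε * t ≠ 0 := by rw [← abs_ne_zero, hεt]; positivity
  calc _ = ‖∫ k in Ioi 1, η k * ((k ^ (-α) : ℝ) : ℂ) *
        exp (I * kleinGordonPhase m (ε * t) p k) * g k‖ := by
        simp only [kleinGordonPhase]; push_cast; rfl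
    _ ≤ (‖c‖ + ∫ q, ‖gh q‖) * ((11 + α) * √(4 + m ^ 2) ^ (3 / 2 : ℝ) / (m * √t) /
        (1 - 2 ^ (-(α - 3 / 2)))) := by
      refine norm_integral_mul_le_of_wienerRep1 (integrableOn_Ioi_mul_rpow_neg_mul_exp_I
        hη.continuousOn hη_le (by linarith) (continuous_kleinGordonPhase m _ p)) hg fun q ↦ ?_
      simpa only [hεt, abs_of_pos hm, kleinGordonPhase_add, ofReal_add, ofReal_mul, mul_add,
        exp_add, mul_assoc] using
        norm_integral_Ioi_kleinGordon_le hm.ne' hα hεt0 hη hη_le hη'_le (p + q)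
    _ = _ := by
      rw [Real.rpow_neg (zero_le_one.trans ht), ← Real.sqrt_eq_rpow]
      field_simp
end
end

section
/- Let V ∈ L¹₂(ℝ), x ≤ 0, and let h₋(x,k) = e^{ikx} f₋(x,k) where f₋ is the left Jost solution. Then the function k ↦ (h₋(x,k) − h₋(x,−k))/k belongs to 𝒜 with ‖(h₋(x,·) − h₋(x,−·))/·‖_𝒜 ≤ C uniformly in x ≤ 0. -/
open MeasureTheory Complex Filter

noncomputable section

/-!
For `y < 0` one has `e^{-2iky} - e^{2iky} = ik ∫_{|p| < -2y} e^{ikp} dp`. Inserting this into the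
two transforms and exchanging the order of integration writes the difference quotient as the
Fourier transform of `p ↦ i ∫_{y < -|p|/2} B(x,y) dy`, whose `L¹` norm is at most
`4 ∫_{y<0} |y| |B(x,y)| dy`. By Tonelli, `∫_{y<0} |y| η₋(x+y) dy ≤ ∫ (x-z)₊² |V(z)| dz`, and for
`x ≤ 0` both this and `γ₋(x)` are bounded by `∫ (1+|z|)² |V|`, uniformly in `x`.
-/

open Set
open scoped ENNReal

section TailIntegral

variable {b : ℝ → ℂ}

def tailKernel (b : ℝ → ℂ) : ℝ × ℝ → ℂ :=
  {q : ℝ × ℝ | |q.2| < -(2 * q.1)}.indicator fun q => b q.1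

def tailIntegral (b : ℝ → ℂ) (p : ℝ) : ℂ := ∫ y in Iio (-|p| / 2), b y

lemma tailKernel_apply_eq_indicator_Ioo (y p : ℝ) :
    tailKernel b (y, p) = (Ioo (2 * y) (-(2 * y))).indicator (fun _ => b y) p := by
  have : (y, p) ∈ {q : ℝ × ℝ | |q.2| < -(2 * q.1)} ↔ p ∈ Ioo (2 * y) (-(2 * y)) := by
    simp only [mem_ofPred_eq, mem_Ioo, abs_lt]
    constructor <;> rintro ⟨h₁, h₂⟩ <;> constructor <;> linarith
  simp only [tailKernel, indicator_apply, this]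

lemma tailKernel_apply_eq_indicator_Iio (y p : ℝ) :
    tailKernel b (y, p) = (Iio (-|p| / 2)).indicator b y := by
  have : (y, p) ∈ {q : ℝ × ℝ | |q.2| < -(2 * q.1)} ↔ y ∈ Iio (-|p| / 2) := by
    simp only [mem_ofPred_eq, mem_Iio]
    constructor <;> intro h <;> linarith
  simp only [tailKernel, indicator_apply, this]

lemma setIntegral_tailKernel_left (p : ℝ) :
    ∫ y in Iio 0, tailKernel b (y, p) = tailIntegral b p := by
  have hp : -|p| / 2 ≤ 0 := by linarith [abs_nonneg p]
  simp_rw [tailKernel_apply_eq_indicator_Iio]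
  rw [integral_indicator measurableSet_Iio, Measure.restrict_restrict measurableSet_Iio,
    Iio_inter_Iio, min_eq_left hp, tailIntegral]

lemma integral_norm_tailKernel_right {y : ℝ} (hy : y < 0) :
    ∫ p, ‖tailKernel b (y, p)‖ = 4 * ‖(y : ℂ) * b y‖ := by
  simp_rw [tailKernel_apply_eq_indicator_Ioo, norm_indicator_eq_indicator_norm]
  rw [integral_indicator_const _ measurableSet_Ioo, measureReal_def, Real.volume_Ioo,
    ENNReal.toReal_ofReal (by linarith), smul_eq_mul, norm_mul, Complex.norm_real,
    Real.norm_of_nonpos hy.le]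
  ring

lemma mul_integral_tailKernel_mul_exp {y : ℝ} (hy : y < 0) {k : ℝ} (hk : k ≠ 0) :
    I * k * ∫ p, tailKernel b (y, p) * cexp (I * k * p) =
      b y * (cexp (-2 * I * k * y) - cexp (-2 * I * (-k) * y)) := by
  have hk' : (k : ℂ) ≠ 0 := ofReal_ne_zero.2 hk
  have hIk : I * k ≠ 0 := mul_ne_zero I_ne_zero hk'
  simp_rw [tailKernel_apply_eq_indicator_Ioo,
    ← indicator_mul_left _ (fun _ => b y) fun p : ℝ => cexp (I * k * p)]
  rw [integral_indicator measurableSet_Ioo, ← integral_Ioc_eq_integral_Ioo,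
    ← intervalIntegral.integral_of_le (by linarith), intervalIntegral.integral_const_mul,
    integral_exp_mul_complex hIk]
  push_cast
  field_simp

lemma integrable_tailKernel (hb : IntegrableOn b (Iio 0))
    (hyb : IntegrableOn (fun y : ℝ => (y : ℂ) * b y) (Iio 0)) :
    Integrable (tailKernel b) ((volume.restrict (Iio 0)).prod volume) := by
  have hS : MeasurableSet {q : ℝ × ℝ | |q.2| < -(2 * q.1)} :=
    measurableSet_lt measurable_snd.abs (measurable_fst.const_mul 2).neg
  refine (integrable_prod_iff (f := tailKernel b)
    (hb.aestronglyMeasurable.comp_fst.indicator hS)).2 ⟨?_, ?_⟩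
  · refine ae_of_all _ fun y => ?_
    simp only [tailKernel_apply_eq_indicator_Ioo]
    exact (integrable_indicator_iff measurableSet_Ioo).2
      (integrableOn_const measure_Ioo_lt_top.ne)
  · refine (hyb.norm.const_mul 4).congr ?_
    filter_upwards [ae_restrict_mem measurableSet_Iio] with y hy
    exact (integral_norm_tailKernel_right hy).symm

theorem integrable_tailIntegral (hb : IntegrableOn b (Iio 0))
    (hyb : IntegrableOn (fun y : ℝ => (y : ℂ) * b y) (Iio 0)) :
    Integrable (tailIntegral b) := by
  simpa only [setIntegral_tailKernel_left] using
    (integrable_tailKernel hb hyb).integral_prod_right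

theorem integral_norm_tailIntegral_le (hb : IntegrableOn b (Iio 0))
    (hyb : IntegrableOn (fun y : ℝ => (y : ℂ) * b y) (Iio 0)) :
    ∫ p, ‖tailIntegral b p‖ ≤ 4 * ∫ y : ℝ in Iio 0, ‖(y : ℂ) * b y‖ := by
  have hK := integrable_tailKernel hb hyb
  calc ∫ p, ‖tailIntegral b p‖ = ∫ p, ‖∫ y in Iio 0, tailKernel b (y, p)‖ := by
        simp only [setIntegral_tailKernel_left]
    _ ≤ ∫ p, ∫ y in Iio 0, ‖tailKernel b (y, p)‖ :=
        integral_mono (by simpa only [setIntegral_tailKernel_left] using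
            (integrable_tailIntegral hb hyb).norm)
          hK.norm.integral_prod_right fun p => norm_integral_le_integral_norm _
    _ = ∫ y in Iio 0, ∫ p, ‖tailKernel b (y, p)‖ := (integral_integral_swap hK.norm).symm
    _ = ∫ y : ℝ in Iio 0, 4 * ‖(y : ℂ) * b y‖ :=
        setIntegral_congr_fun measurableSet_Iio fun y hy => integral_norm_tailKernel_right hy
    _ = 4 * ∫ y : ℝ in Iio 0, ‖(y : ℂ) * b y‖ := integral_const_mul _ _

theorem sub_div_eq_integral_exp_mul_tailIntegral (hb : IntegrableOn b (Iio 0))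
    (hyb : IntegrableOn (fun y : ℝ => (y : ℂ) * b y) (Iio 0))
    {k : ℝ} (hk : k ≠ 0) :
    ((∫ y in Iio 0, b y * cexp (-2 * I * k * y)) -
        ∫ y in Iio 0, b y * cexp (-2 * I * (-k) * y)) / k =
      ∫ p : ℝ, cexp (I * k * p) * (I * tailIntegral b p) := by
  have hexp : ∀ t : ℝ, IntegrableOn (fun y : ℝ => b y * cexp (-2 * I * t * y)) (Iio 0) :=
    fun t =>
    hb.mul_bdd (by fun_prop) (ae_of_all _ fun y => by
      rw [show -2 * I * t * y = ((-2 * t * y : ℝ) : ℂ) * I by push_cast; ring,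
        norm_exp_ofReal_mul_I])
  have hK : Integrable (fun q : ℝ × ℝ => tailKernel b q * cexp (I * k * q.2))
      ((volume.restrict (Iio 0)).prod volume) :=
    (integrable_tailKernel hb hyb).mul_bdd (by fun_prop) (ae_of_all _ fun q => by
      rw [show I * k * q.2 = ((k * q.2 : ℝ) : ℂ) * I by push_cast; ring, norm_exp_ofReal_mul_I])
  have hk' : (k : ℂ) ≠ 0 := ofReal_ne_zero.2 hk
  calc ((∫ y in Iio 0, b y * cexp (-2 * I * k * y)) -
        ∫ y in Iio 0, b y * cexp (-2 * I * (-k) * y)) / k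
      = (∫ y in Iio 0, I * k * ∫ p, tailKernel b (y, p) * cexp (I * k * p)) / k := by
        have hexp_neg := hexp (-k)
        push_cast at hexp_neg
        rw [← integral_sub (hexp k) hexp_neg]
        congr 1
        refine setIntegral_congr_fun measurableSet_Iio fun y hy => ?_
        rw [mul_integral_tailKernel_mul_exp hy hk, mul_sub]
    _ = I * ∫ p, ∫ y in Iio 0, tailKernel b (y, p) * cexp (I * k * p) := by
        rw [integral_const_mul, integral_integral_swap hK]
        field_simp
    _ = ∫ p : ℝ, cexp (I * k * p) * (I * tailIntegral b p) := by
        rw [← integral_const_mul]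
        refine integral_congr_ae (ae_of_all _ fun p => ?_)
        simp only [integral_mul_const, setIntegral_tailKernel_left]
        ring

end TailIntegral

lemma lintegral_Iio_mul_lintegral_Iio_le {W : ℝ → ℝ≥0∞} (hW : AEMeasurable W) (a : ℝ) :
    ∫⁻ y in Iio 0, ENNReal.ofReal (-y) * ∫⁻ z in Iio (a + y), W z ≤
      ∫⁻ z, ENNReal.ofReal (a - z) ^ 2 * W z := by
  have hmeas : AEMeasurable
      (fun q : ℝ × ℝ => ENNReal.ofReal (-q.1) * (Iio (a + q.1)).indicator W q.2)
      ((volume.restrict (Iio 0)).prod volume) :=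
    measurable_fst.neg.ennreal_ofReal.aemeasurable.mul
      (hW.comp_snd.indicator
        (measurableSet_lt measurable_snd (measurable_const.add measurable_fst)))
  have hpt : ∀ y z : ℝ, ENNReal.ofReal (-y) * (Iio (a + y)).indicator W z ≤
      (Ioo (z - a) 0).indicator (fun _ => ENNReal.ofReal (a - z) * W z) y := by
    intro y z
    by_cases hz : z < a + y
    · by_cases hy : y < 0
      · rw [indicator_of_mem (mem_Iio.2 hz), indicator_of_mem (mem_Ioo.2 ⟨by linarith, hy⟩)]
        gcongr
        linarith
      · rw [ENNReal.ofReal_of_nonpos (by linarith), zero_mul]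
        exact zero_le
    · rw [indicator_of_notMem (by simpa using hz), mul_zero]
      exact zero_le
  calc ∫⁻ y in Iio 0, ENNReal.ofReal (-y) * ∫⁻ z in Iio (a + y), W z
      = ∫⁻ y in Iio 0, ∫⁻ z, ENNReal.ofReal (-y) * (Iio (a + y)).indicator W z := by
        refine lintegral_congr fun y => ?_
        rw [lintegral_const_mul' _ _ ENNReal.ofReal_ne_top, lintegral_indicator measurableSet_Iio]
    _ = ∫⁻ z, ∫⁻ y in Iio 0, ENNReal.ofReal (-y) * (Iio (a + y)).indicator W z :=
        lintegral_lintegral_swap hmeas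
    _ ≤ ∫⁻ z, ∫⁻ y, (Ioo (z - a) 0).indicator (fun _ => ENNReal.ofReal (a - z) * W z) y :=
        lintegral_mono fun z =>
          (setLIntegral_le_lintegral _ _).trans (lintegral_mono fun y => hpt y z)
    _ = ∫⁻ z, ENNReal.ofReal (a - z) ^ 2 * W z := by
        refine lintegral_congr fun z => ?_
        rw [lintegral_indicator_const measurableSet_Ioo, Real.volume_Ioo, zero_sub, neg_sub, sq]
        ring

lemma integrable_and_integral_norm_le_of_lintegral_le {α E : Type*} [MeasurableSpace α]
    {μ : Measure α} [NormedAddCommGroup E] {f : α → E} {c : ℝ} (hf : AEStronglyMeasurable f μ)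
    (hc : 0 ≤ c) (h : ∫⁻ x, ‖f x‖ₑ ∂μ ≤ ENNReal.ofReal c) :
    Integrable f μ ∧ ∫ x, ‖f x‖ ∂μ ≤ c :=
  ⟨⟨hf, h.trans_lt ENNReal.ofReal_lt_top⟩, by
    rw [integral_norm_eq_lintegral_enorm hf]
    exact ENNReal.toReal_le_of_le_ofReal hc h⟩

lemma ofReal_integral_abs_le_lintegral_enorm {α : Type*} [MeasurableSpace α] {μ : Measure α}
    (f : α → ℝ) : ENNReal.ofReal (∫ x, |f x| ∂μ) ≤ ∫⁻ x, ‖f x‖ₑ ∂μ := by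
  rw [← Real.enorm_of_nonneg (integral_nonneg fun x => abs_nonneg _)]
  simpa only [Real.enorm_abs] using enorm_integral_le_lintegral_enorm (fun x => |f x|)

section Weighted

variable {V : ℝ → ℝ}

lemma aemeasurable_enorm_of_integrable_weight (hV : Integrable fun x => (1 + |x|) ^ 2 * |V x|) :
    AEMeasurable fun x => ‖V x‖ₑ := by
  have hw : Measurable fun x : ℝ => ((1 + |x|) ^ 2)⁻¹ := by fun_prop
  refine (hw.aemeasurable.mul hV.aemeasurable).enorm.congr (ae_of_all _ fun x => ?_)
  simp only [Pi.mul_apply]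
  rw [inv_mul_cancel_left₀ (by positivity), Real.enorm_abs]

lemma setIntegral_Iio_sub_mul_abs_le (hV : Integrable fun x => (1 + |x|) ^ 2 * |V x|) {x : ℝ}
    (hx : x ≤ 0) :
    ∫ z in Iio x, (x - z) * |V z| ≤ ∫ z, (1 + |z|) ^ 2 * |V z| := by
  have hle : ∀ z, x - z ≤ (1 + |z|) ^ 2 := fun z => by nlinarith [neg_le_abs z, abs_nonneg z]
  calc ∫ z in Iio x, (x - z) * |V z| ≤ ∫ z in Iio x, (1 + |z|) ^ 2 * |V z| :=
        integral_mono_of_nonneg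
          ((ae_restrict_iff' measurableSet_Iio).2 (ae_of_all _ fun z hz =>
            mul_nonneg (by linarith [mem_Iio.1 hz]) (abs_nonneg _)))
          hV.integrableOn (ae_of_all _ fun z => mul_le_mul_of_nonneg_right (hle z) (abs_nonneg _))
    _ ≤ ∫ z, (1 + |z|) ^ 2 * |V z| :=
        setIntegral_le_integral hV (ae_of_all _ fun z => by positivity)

theorem lintegral_Iio_enorm_mul_le (hV : Integrable fun x => (1 + |x|) ^ 2 * |V x|)
    {f : ℝ → ℂ} {K a : ℝ} (ha : a ≤ 0)
    (hf : ∀ y, ‖f y‖ ≤ K * ∫ z in Iio (a + y), |V z|) :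
    ∫⁻ y : ℝ in Iio 0, ‖(y : ℂ) * f y‖ₑ ≤
      ENNReal.ofReal K * ENNReal.ofReal (∫ z, (1 + |z|) ^ 2 * |V z|) := by
  have hweight : ∀ z, ENNReal.ofReal (a - z) ^ 2 * ‖V z‖ₑ ≤
      ENNReal.ofReal ((1 + |z|) ^ 2 * |V z|) := fun z => by
    rw [ENNReal.ofReal_mul (by positivity), ENNReal.ofReal_pow (by positivity),
      ← Real.enorm_eq_ofReal_abs]
    gcongr
    linarith [neg_le_abs z]
  calc ∫⁻ y : ℝ in Iio 0, ‖(y : ℂ) * f y‖ₑ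
      ≤ ∫⁻ y in Iio 0, ENNReal.ofReal K *
          (ENNReal.ofReal (-y) * ∫⁻ z in Iio (a + y), ‖V z‖ₑ) := by
        refine setLIntegral_mono' measurableSet_Iio fun y hy => ?_
        rw [← ofReal_norm, norm_mul, Complex.norm_real,
          Real.norm_of_nonpos (mem_Iio.1 hy).le, ENNReal.ofReal_mul (by linarith [mem_Iio.1 hy])]
        calc ENNReal.ofReal (-y) * ENNReal.ofReal ‖f y‖
            ≤ ENNReal.ofReal (-y) * ENNReal.ofReal (K * ∫ z in Iio (a + y), |V z|) := by
              gcongr; exact hf y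
          _ ≤ _ := by
              rw [ENNReal.ofReal_mul' (integral_nonneg fun z => abs_nonneg _), mul_left_comm]
              gcongr
              exact ofReal_integral_abs_le_lintegral_enorm V
    _ = ENNReal.ofReal K * ∫⁻ y in Iio 0, ENNReal.ofReal (-y) * ∫⁻ z in Iio (a + y), ‖V z‖ₑ :=
        lintegral_const_mul' _ _ ENNReal.ofReal_ne_top
    _ ≤ ENNReal.ofReal K * ∫⁻ z, ENNReal.ofReal (a - z) ^ 2 * ‖V z‖ₑ :=
        mul_le_mul_right
          (lintegral_Iio_mul_lintegral_Iio_le (aemeasurable_enorm_of_integrable_weight hV) a) _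
    _ ≤ ENNReal.ofReal K * ENNReal.ofReal (∫ z, (1 + |z|) ^ 2 * |V z|) := by
        rw [ofReal_integral_eq_lintegral_ofReal hV (ae_of_all _ fun z => by positivity)]
        gcongr with z
        exact hweight z

end Weighted

/-- let `V ∈ L¹₂(ℝ)` and let `B₋(x,y)` be the transformation operator kernel
of the left Jost solution, satisfying `|B₋(x,y)| ≤ e^{γ₋(x)} η₋(x+y)` with
`γ₋(x) = ∫_{−∞}^x (x−z)|V(z)|dz` and `η₋(x) = ∫_{−∞}^x |V(z)|dz`, so that
`h₋(x,k) = 1 + ∫_{−∞}^0 B₋(x,y) e^{−2iky} dy`.  Then for `x ≤ 0` the difference quotient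
`k ↦ (h₋(x,k) − h₋(x,−k))/k` belongs to the Wiener algebra `𝒜` with `𝒜`-norm bounded
uniformly in `x ≤ 0`. -/
theorem h_minus_difference_quotient_in_wiener
    (V : ℝ → ℝ) (hV : Integrable (fun x => (1 + |x|) ^ 2 * |V x|))
    (B : ℝ → ℝ → ℝ)
    (hBmeas : ∀ x : ℝ, IntegrableOn (fun y => B x y) (Set.Iio 0))
    (hB : ∀ x y : ℝ, |B x y| ≤
      Real.exp (∫ z in Set.Iio x, (x - z) * |V z|) * ∫ z in Set.Iio (x + y), |V z|) :
    ∃ C : ℝ, ∀ x : ℝ, x ≤ 0 →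
      ∃ g : ℝ → ℂ, Integrable g ∧
        (∀ k : ℝ, k ≠ 0 →
          (((1 + ∫ y in Set.Iio (0:ℝ),
                (B x y : ℂ) * Complex.exp (-2 * Complex.I * k * y)) -
             (1 + ∫ y in Set.Iio (0:ℝ),
                (B x y : ℂ) * Complex.exp (-2 * Complex.I * (-k) * y))) / k) =
            ∫ p : ℝ, Complex.exp (Complex.I * k * p) * g p) ∧
        (∫ p : ℝ, ‖g p‖) ≤ C := by
  set M := ∫ z, (1 + |z|) ^ 2 * |V z|
  have hM : 0 ≤ M := integral_nonneg fun z => by positivity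
  refine ⟨4 * (Real.exp M * M), fun x hx => ?_⟩
  set b : ℝ → ℂ := fun y => (B x y : ℂ)
  have hb : IntegrableOn b (Iio 0) := (hBmeas x).ofReal
  have hbV : ∀ y, ‖b y‖ ≤ Real.exp M * ∫ z in Iio (x + y), |V z| := fun y => by
    rw [Complex.norm_real, Real.norm_eq_abs]
    exact (hB x y).trans (mul_le_mul_of_nonneg_right
      (Real.exp_le_exp.2 (setIntegral_Iio_sub_mul_abs_le hV hx))
      (integral_nonneg fun _ => abs_nonneg _))
  obtain ⟨hyb, hyb_le⟩ := integrable_and_integral_norm_le_of_lintegral_le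
    (f := fun y : ℝ => (y : ℂ) * b y)
    (continuous_ofReal.aestronglyMeasurable.mul hb.aestronglyMeasurable) (by positivity)
    ((lintegral_Iio_enorm_mul_le hV hx hbV).trans_eq
      (ENNReal.ofReal_mul (Real.exp_pos M).le).symm)
  refine ⟨fun p => I * tailIntegral b p, (integrable_tailIntegral hb hyb).const_mul I,
    fun k hk => ?_, ?_⟩
  · rw [add_sub_add_left_eq_sub]
    exact sub_div_eq_integral_exp_mul_tailIntegral hb hyb hk
  · calc ∫ p, ‖I * tailIntegral b p‖ = ∫ p, ‖tailIntegral b p‖ := by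
          simp only [norm_mul, norm_I, one_mul]
      _ ≤ 4 * ∫ y : ℝ in Iio 0, ‖(y : ℂ) * b y‖ := integral_norm_tailIntegral_le hb hyb
      _ ≤ 4 * (Real.exp M * M) := by gcongr
end
end
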